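/- arXiv:1802.04976 — 4 statements merged into one kernel-verified Lean document; each statement's English description precedes it below -/
import Mathlib

section
/- Let ℓ be an odd prime. If ℓ ≡ 1, 3, or 5 (mod 8), then ℓ − N_ℓ ≡ 2 (mod 4); if ℓ ≡ 7 (mod 8), then ℓ − N_ℓ ≡ 0 (mod 4). -/
open Finset


theorem npts_eq (p : ℕ) [Fact p.Prime] (hp2 : p ≠ 2) :
    (Nat.card {q : ZMod p × ZMod p // q.2 ^ 2 = q.1 ^ 3 + q.1 ^ 2 + q.1 + 1} : ℤ)
      = p + ∑ x : ZMod p, quadraticChar (ZMod p) (x ^ 3 + x ^ 2 + x + 1) := by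
  have hF : ringChar (ZMod p) ≠ 2 := by
    rw [ZMod.ringChar_zmod_n]; exact hp2
  have e : {q : ZMod p × ZMod p // q.2 ^ 2 = q.1 ^ 3 + q.1 ^ 2 + q.1 + 1}
      ≃ Σ x : ZMod p, {y : ZMod p // y ^ 2 = x ^ 3 + x ^ 2 + x + 1} :=
    ⟨fun q => ⟨q.1.1, q.1.2, q.2⟩, fun s => ⟨(s.1, s.2.1), s.2.2⟩,
      fun _ => rfl, fun _ => rfl⟩
  rw [Nat.card_eq_fintype_card, Fintype.card_congr e, Fintype.card_sigma]
  push_cast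
  have hx : ∀ x : ZMod p, (Fintype.card {y : ZMod p // y ^ 2 = x ^ 3 + x ^ 2 + x + 1} : ℤ)
      = quadraticChar (ZMod p) (x ^ 3 + x ^ 2 + x + 1) + 1 := by
    intro x
    have := quadraticChar_card_sqrts hF (x ^ 3 + x ^ 2 + x + 1)
    rw [← this, Set.toFinset_card]
    congr 1
  simp only [hx]
  rw [Finset.sum_add_distrib, Finset.sum_const, card_univ, ZMod.card]
  -- (cast already normalized)
  ring
variable {p : ℕ} [Fact p.Prime]


theorem key_id {a : ZMod p} (ha : a ≠ 0) :
    quadraticChar (ZMod p) (a ^ 3 + a ^ 2 + a + 1)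
      = quadraticChar (ZMod p) a *
        quadraticChar (ZMod p) (a⁻¹ ^ 3 + a⁻¹ ^ 2 + a⁻¹ + 1) := by
  have h : a ^ 3 + a ^ 2 + a + 1 = a ^ 3 * (a⁻¹ ^ 3 + a⁻¹ ^ 2 + a⁻¹ + 1) := by
    field_simp; ring
  rw [h, map_mul, map_pow]
  have h2 : quadraticChar (ZMod p) a ^ 3
      = quadraticChar (ZMod p) a * quadraticChar (ZMod p) a ^ 2 := by ring
  rw [h2, quadraticChar_sq_one ha, mul_one]

theorem sum_nonsquares (_hp2 : p ≠ 2) :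
    ∑ x ∈ univ.filter (fun x : ZMod p => ¬ IsSquare x),
      quadraticChar (ZMod p) (x ^ 3 + x ^ 2 + x + 1) = 0 := by
  have hne : ∀ x : ZMod p, ¬ IsSquare x → x ≠ 0 := by
    rintro x hx rfl; exact hx ⟨0, by ring⟩
  refine Finset.sum_involution (fun a _ => a⁻¹) ?_ ?_ ?_ ?_
  · intro a ha
    simp only [mem_filter, mem_univ, true_and] at ha
    have ha0 := hne a ha
    have hchi : quadraticChar (ZMod p) a = -1 :=
      quadraticChar_neg_one_iff_not_isSquare.mpr ha
    rw [key_id ha0, hchi]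
    ring
  · intro a ha hfa
    simp only [mem_filter, mem_univ, true_and] at ha
    intro hinv
    have ha0 := hne a ha
    have hsq : a * a = 1 := by
      nth_rewrite 1 [← hinv]; exact inv_mul_cancel₀ ha0
    have : a = 1 ∨ a = -1 := mul_self_eq_one_iff.mp hsq
    rcases this with rfl | rfl
    · exact ha ⟨1, by ring⟩
    · apply hfa
      have : ((-1 : ZMod p) ^ 3 + (-1) ^ 2 + (-1) + 1) = 0 := by ring
      rw [this, MulChar.map_zero]
  · intro a ha
    simp only [mem_filter, mem_univ, true_and] at ha ⊢
    intro hsq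
    apply ha
    obtain ⟨b, hb⟩ := hsq
    have ha0 := hne a ha
    refine ⟨b⁻¹, ?_⟩
    rw [← mul_inv, ← hb, inv_inv]
  · intro a ha
    exact inv_inv a
variable {p : ℕ} [Fact p.Prime]


theorem my_two_ne_zero (hp2 : p ≠ 2) : (2 : ZMod p) ≠ 0 := by
  have : ((2 : ℕ) : ZMod p) ≠ 0 := by
    rw [Ne, ZMod.natCast_eq_zero_iff]
    intro h
    exact hp2 ((Nat.prime_dvd_prime_iff_eq (Fact.out : p.Prime) Nat.prime_two).mp h)
  simpa using this

theorem even_T (hp2 : p ≠ 2) :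
    Even (univ.filter (fun x : ZMod p => IsSquare x ∧
      quadraticChar (ZMod p) (x ^ 3 + x ^ 2 + x + 1) = 1)).card := by
  set T : Finset (ZMod p) := univ.filter (fun x : ZMod p => IsSquare x ∧
      quadraticChar (ZMod p) (x ^ 3 + x ^ 2 + x + 1) = 1) with hT
  set T' : Finset (ZMod p) := T.filter (fun x => x ≠ 0 ∧ x ≠ 1) with hT'
  have h0T : (0 : ZMod p) ∈ T := by
    simp only [hT, mem_filter, mem_univ, true_and]
    constructor
    · exact ⟨0, by ring⟩
    · norm_num
  have h1T : (1 : ZMod p) ∈ T := by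
    simp only [hT, mem_filter, mem_univ, true_and]
    constructor
    · exact ⟨1, by ring⟩
    · have h4 : ((1 : ZMod p) ^ 3 + 1 ^ 2 + 1 + 1) = 2 ^ 2 := by ring
      rw [h4]
      exact quadraticChar_sq_one' (my_two_ne_zero hp2)
  -- T' has even cardinality via the involution x ↦ x⁻¹
  have hsum : ∑ _x ∈ T', (1 : ZMod 2) = 0 := by
    refine Finset.sum_involution (fun a _ => a⁻¹) ?_ ?_ ?_ ?_
    · intro a _; decide
    · intro a ha _
      simp only [hT', hT, mem_filter, mem_univ, true_and] at ha
      obtain ⟨⟨hsq, hchi⟩, ha0, ha1⟩ := ha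
      intro hinv
      have hmul : a * a = 1 := by
        nth_rewrite 1 [← hinv]; exact inv_mul_cancel₀ ha0
      rcases mul_self_eq_one_iff.mp hmul with rfl | rfl
      · exact ha1 rfl
      · have h0 : ((-1 : ZMod p) ^ 3 + (-1) ^ 2 + (-1) + 1) = 0 := by ring
        rw [h0, MulChar.map_zero] at hchi
        exact one_ne_zero hchi.symm
    · intro a ha
      simp only [hT', hT, mem_filter, mem_univ, true_and] at ha ⊢
      obtain ⟨⟨hsq, hchi⟩, ha0, ha1⟩ := ha
      obtain ⟨b, hb⟩ := hsq
      refine ⟨⟨⟨b⁻¹, by rw [← mul_inv, ← hb]⟩, ?_⟩, inv_ne_zero ha0, ?_⟩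
      · have hca : quadraticChar (ZMod p) a = 1 :=
          (quadraticChar_one_iff_isSquare ha0).mpr ⟨b, hb⟩
        have := key_id ha0
        rw [hca, one_mul] at this
        rw [← this]; exact hchi
      · intro h1
        apply ha1
        rw [← inv_inv a, h1, inv_one]
    · intro a _; exact inv_inv a
  rw [Finset.sum_const, nsmul_eq_mul, mul_one] at hsum
  have hT'even : Even T'.card := by
    have := (ZMod.natCast_eq_zero_iff T'.card 2).mp hsum
    exact even_iff_two_dvd.mpr this
  -- T = insert 0 (insert 1 T')
  have hTT' : T = insert 0 (insert 1 T') := by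
    ext x
    simp only [hT', mem_insert, mem_filter]
    constructor
    · intro hx
      by_cases h0 : x = 0
      · left; exact h0
      by_cases h1 : x = 1
      · right; left; exact h1
      · right; right; exact ⟨hx, h0, h1⟩
    · rintro (rfl | rfl | ⟨hx, _⟩)
      · exact h0T
      · exact h1T
      · exact hx
  have h0ni : (0 : ZMod p) ∉ insert (1 : ZMod p) T' := by
    simp only [hT', mem_insert, mem_filter]
    rintro (h | ⟨-, h, -⟩)
    · exact zero_ne_one h
    · exact h rfl
  have h1ni : (1 : ZMod p) ∉ T' := by
    simp only [hT', mem_filter]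
    rintro ⟨-, -, h⟩
    exact h rfl
  rw [hTT', Finset.card_insert_of_notMem h0ni, Finset.card_insert_of_notMem h1ni]
  obtain ⟨k, hk⟩ := hT'even
  exact ⟨k + 1, by omega⟩
theorem card_squares (hp2 : p ≠ 2) :
    2 * ((univ.filter (fun x : ZMod p => IsSquare x)).card : ℤ) = p + 1 := by
  have hF : ringChar (ZMod p) ≠ 2 := by rw [ZMod.ringChar_zmod_n]; exact hp2
  have hsum := quadraticChar_sum_zero hF
  rw [← Finset.sum_filter_add_sum_filter_not univ (fun x : ZMod p => IsSquare x)] at hsum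
  set Q : Finset (ZMod p) := univ.filter (fun x : ZMod p => IsSquare x) with hQ
  have h0Q : (0 : ZMod p) ∈ Q := by
    simp only [hQ, mem_filter, mem_univ, true_and]; exact ⟨0, by ring⟩
  have hQ1 : ∀ x ∈ Q.erase 0, quadraticChar (ZMod p) x = 1 := by
    intro x hx
    simp only [hQ, mem_erase, mem_filter, mem_univ, true_and] at hx
    exact (quadraticChar_one_iff_isSquare hx.1).mpr hx.2
  have hcard1 : 1 ≤ Q.card := Finset.card_pos.mpr ⟨0, h0Q⟩
  have hQsum : ∑ x ∈ Q, quadraticChar (ZMod p) x = (Q.card : ℤ) - 1 := by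
    rw [← Finset.add_sum_erase _ _ h0Q, MulChar.map_zero, zero_add,
        Finset.sum_congr rfl hQ1, Finset.sum_const, Finset.card_erase_of_mem h0Q,
        nsmul_eq_mul, mul_one]
    omega
  have hN1 : ∀ x ∈ univ.filter (fun x : ZMod p => ¬ IsSquare x),
      quadraticChar (ZMod p) x = -1 := by
    intro x hx
    simp only [mem_filter, mem_univ, true_and] at hx
    exact quadraticChar_neg_one_iff_not_isSquare.mpr hx
  have hNsum : ∑ x ∈ univ.filter (fun x : ZMod p => ¬ IsSquare x),
      quadraticChar (ZMod p) x
      = -(((univ.filter (fun x : ZMod p => ¬ IsSquare x)).card : ℤ)) := by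
    rw [Finset.sum_congr rfl hN1, Finset.sum_const, nsmul_eq_mul]
    ring
  have hcards : Q.card + (univ.filter (fun x : ZMod p => ¬ IsSquare x)).card = p := by
    rw [Finset.card_filter_add_card_filter_not, card_univ, ZMod.card]
  rw [hQsum, hNsum] at hsum
  omega
theorem root_char {x : ZMod p} :
    x ^ 3 + x ^ 2 + x + 1 = 0 ↔ x = -1 ∨ x ^ 2 = -1 := by
  have hfac : x ^ 3 + x ^ 2 + x + 1 = (x + 1) * (x ^ 2 + 1) := by ring
  rw [hfac, mul_eq_zero]
  constructor
  · rintro (h | h)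
    · left; linear_combination h
    · right; linear_combination h
  · rintro (h | h)
    · left; rw [h]; ring
    · right; rw [h]; ring

/-- If `i * i = -1` then `i` is a square iff `p % 8 = 1`. -/
theorem isSquare_i (hp2 : p ≠ 2) {i : ZMod p} (hi : i * i = -1) (hp4 : p % 4 = 1) :
    IsSquare i ↔ p % 8 = 1 := by
  have hF : ringChar (ZMod p) ≠ 2 := by rw [ZMod.ringChar_zmod_n]; exact hp2
  have hi0 : i ≠ 0 := by
    rintro rfl
    exact (one_ne_zero : (1 : ZMod p) ≠ 0) (by linear_combination hi)
  rw [ZMod.euler_criterion p hi0]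
  have hdiv : p / 2 = 2 * (p / 4) := by omega
  have hpow : i ^ (p / 2) = (-1 : ZMod p) ^ (p / 4) := by
    rw [hdiv, pow_mul, sq, hi]
  rw [hpow]
  have hne : (-1 : ZMod p) ≠ 1 := Ring.neg_one_ne_one_of_char_ne_two hF
  constructor
  · intro h
    by_contra h8
    have hodd : Odd (p / 4) := Nat.odd_iff.mpr (by omega)
    rw [hodd.neg_one_pow] at h
    exact hne h
  · intro h8
    have heven : Even (p / 4) := Nat.even_iff.mpr (by omega)
    rw [heven.neg_one_pow]

theorem card_roots_three (hp8 : p % 8 = 1) :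
    ((univ.filter (fun x : ZMod p => IsSquare x)).filter
      (fun x => x ^ 3 + x ^ 2 + x + 1 = 0)).card = 3 := by
  have hp2 : p ≠ 2 := by omega
  obtain ⟨i, hi⟩ := (ZMod.exists_sq_eq_neg_one_iff (p := p)).mpr (by omega)
  have hi' : i * i = -1 := hi.symm
  have hsqneg1 : IsSquare (-1 : ZMod p) := ⟨i, hi⟩
  have hsqi : IsSquare i := (isSquare_i hp2 hi' (by omega)).mpr hp8
  have hsqni : IsSquare (-i) := by
    have := hsqneg1.mul hsqi
    rwa [neg_one_mul] at this
  have hi0 : i ≠ 0 := by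
    rintro rfl
    exact (one_ne_zero : (1 : ZMod p) ≠ 0) (by linear_combination hi')
  have h2 : (2 : ZMod p) ≠ 0 := my_two_ne_zero hp2
  have hne1 : (-1 : ZMod p) ≠ i := by
    intro h
    rw [← h] at hi'
    apply h2; linear_combination hi'
  have hne2 : (-1 : ZMod p) ≠ -i := by
    intro h
    have h1 : i = 1 := by linear_combination h
    rw [h1] at hi'
    apply h2; linear_combination hi'
  have hne3 : i ≠ -i := by
    intro h
    apply hi0
    have : 2 * i = 0 := by linear_combination h
    rcases mul_eq_zero.mp this with h' | h'
    · exact absurd h' h2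
    · exact h'
  have hset : (univ.filter (fun x : ZMod p => IsSquare x)).filter
      (fun x => x ^ 3 + x ^ 2 + x + 1 = 0) = {-1, i, -i} := by
    ext x
    simp only [mem_filter, mem_univ, true_and, mem_insert, mem_singleton]
    constructor
    · rintro ⟨-, hroot⟩
      rcases root_char.mp hroot with h | h
      · left; exact h
      · have : (x - i) * (x + i) = 0 := by linear_combination h - hi'
        rcases mul_eq_zero.mp this with h' | h'
        · right; left; linear_combination h'
        · right; right; linear_combination h'
    · rintro (rfl | rfl | rfl)
      · exact ⟨hsqneg1, by rw [root_char]; left; rfl⟩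
      · refine ⟨hsqi, by rw [root_char]; right; rw [sq]; exact hi'⟩
      · refine ⟨hsqni, by rw [root_char]; right; rw [sq]; linear_combination hi'⟩
  rw [hset]
  rw [Finset.card_insert_of_notMem (by simp [hne1, hne2]),
      Finset.card_insert_of_notMem (by simp [hne3]), Finset.card_singleton]

theorem card_roots_one (hp8 : p % 8 = 5) :
    ((univ.filter (fun x : ZMod p => IsSquare x)).filter
      (fun x => x ^ 3 + x ^ 2 + x + 1 = 0)).card = 1 := by
  have hp2 : p ≠ 2 := by omega
  obtain ⟨i, hi⟩ := (ZMod.exists_sq_eq_neg_one_iff (p := p)).mpr (by omega)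
  have hi' : i * i = -1 := hi.symm
  have hsqneg1 : IsSquare (-1 : ZMod p) := ⟨i, hi⟩
  have hnsqi : ¬ IsSquare i := fun h => by
    have := (isSquare_i hp2 hi' (by omega)).mp h; omega
  have hnsqni : ¬ IsSquare (-i) := by
    intro h
    apply hnsqi
    have := hsqneg1.mul h
    rwa [neg_one_mul, neg_neg] at this
  have hset : (univ.filter (fun x : ZMod p => IsSquare x)).filter
      (fun x => x ^ 3 + x ^ 2 + x + 1 = 0) = {-1} := by
    ext x
    simp only [mem_filter, mem_univ, true_and, mem_singleton]
    constructor
    · rintro ⟨hsq, hroot⟩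
      rcases root_char.mp hroot with h | h
      · exact h
      · exfalso
        have : (x - i) * (x + i) = 0 := by linear_combination h - hi'
        rcases mul_eq_zero.mp this with h' | h'
        · exact hnsqi (by rw [← sub_eq_zero.mp h']; exact hsq)
        · exact hnsqni (by rw [← eq_neg_of_add_eq_zero_left h']; exact hsq)
    · rintro rfl
      exact ⟨hsqneg1, by rw [root_char]; left; rfl⟩
  rw [hset, Finset.card_singleton]

theorem card_roots_zero (hp4 : p % 4 = 3) :
    ((univ.filter (fun x : ZMod p => IsSquare x)).filter
      (fun x => x ^ 3 + x ^ 2 + x + 1 = 0)).card = 0 := by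
  rw [Finset.card_eq_zero]
  ext x
  simp only [mem_filter, mem_univ, true_and, notMem_empty, iff_false, not_and]
  intro hsq hroot
  have hnsq : ¬ IsSquare (-1 : ZMod p) := by
    rw [ZMod.exists_sq_eq_neg_one_iff]; omega
  rcases root_char.mp hroot with h | h
  · subst h; exact hnsq hsq
  · exact hnsq ⟨x, by rw [← h, sq]⟩

/-- `N_ℓ`: the number of pairs `(x, y) ∈ 𝔽_ℓ × 𝔽_ℓ` with `y² = x³ + x² + x + 1`. -/
noncomputable def Npts (ℓ : ℕ) : ℕ :=
  Nat.card {p : ZMod ℓ × ZMod ℓ // p.2 ^ 2 = p.1 ^ 3 + p.1 ^ 2 + p.1 + 1}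

/-- For an odd prime `ℓ`, the trace of Frobenius `ℓ - N_ℓ` of `y² = x³ + x² + x + 1`
is `≡ 2 (mod 4)` if `ℓ ≡ 1, 3, 5 (mod 8)` and `≡ 0 (mod 4)` if `ℓ ≡ 7 (mod 8)`. -/
theorem trace_frobenius_mod_four (ℓ : ℕ) (hℓ : ℓ.Prime) (hodd : ℓ ≠ 2) :
    ((ℓ % 8 = 1 ∨ ℓ % 8 = 3 ∨ ℓ % 8 = 5) → (ℓ : ℤ) - (Npts ℓ : ℤ) ≡ 2 [ZMOD 4]) ∧
    (ℓ % 8 = 7 → (ℓ : ℤ) - (Npts ℓ : ℤ) ≡ 0 [ZMOD 4]) := by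
  haveI : Fact ℓ.Prime := ⟨hℓ⟩
  have hNpts : Npts ℓ = Nat.card {q : ZMod ℓ × ZMod ℓ //
      q.2 ^ 2 = q.1 ^ 3 + q.1 ^ 2 + q.1 + 1} := rfl
  have hN : (Npts ℓ : ℤ) = ℓ + ∑ x : ZMod ℓ,
      quadraticChar (ZMod ℓ) (x ^ 3 + x ^ 2 + x + 1) := by
    rw [hNpts]; exact npts_eq ℓ hodd
  -- decompose the character sum
  set g : ZMod ℓ → ℤ := fun x => quadraticChar (ZMod ℓ) (x ^ 3 + x ^ 2 + x + 1) with hg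
  set Q : Finset (ZMod ℓ) := univ.filter (fun x : ZMod ℓ => IsSquare x) with hQ
  have hsplit : ∑ x : ZMod ℓ, g x = ∑ x ∈ Q, g x := by
    rw [← Finset.sum_filter_add_sum_filter_not univ (fun x : ZMod ℓ => IsSquare x) g]
    have := sum_nonsquares (p := ℓ) hodd
    rw [hQ]
    simpa [hg] using this
  set T : Finset (ZMod ℓ) := univ.filter (fun x : ZMod ℓ => IsSquare x ∧
      quadraticChar (ZMod ℓ) (x ^ 3 + x ^ 2 + x + 1) = 1) with hT
  set R : Finset (ZMod ℓ) := Q.filter (fun x => x ^ 3 + x ^ 2 + x + 1 = 0) with hR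
  have hTQ : T = Q.filter (fun x => g x = 1) := by
    rw [hQ, Finset.filter_filter, hT]
  set Q' : Finset (ZMod ℓ) := Q.filter (fun x => ¬ g x = 1) with hQ'
  have hsum1 : ∑ x ∈ Q.filter (fun x => g x = 1), g x = (T.card : ℤ) := by
    rw [Finset.sum_congr rfl (fun x hx => (Finset.mem_filter.mp hx).2),
      Finset.sum_const, hTQ]
    simp
  have hRQ' : Q'.filter (fun x => x ^ 3 + x ^ 2 + x + 1 = 0) = R := by
    rw [hQ', Finset.filter_filter, hR]
    apply Finset.filter_congr
    intro x _
    constructor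
    · rintro ⟨-, h⟩; exact h
    · intro h
      refine ⟨?_, h⟩
      rw [hg]
      simp only [h, MulChar.map_zero]
      exact fun h1 => one_ne_zero h1.symm
  have hsum0 : ∑ x ∈ Q'.filter (fun x => x ^ 3 + x ^ 2 + x + 1 = 0), g x = 0 := by
    apply Finset.sum_eq_zero
    intro x hx
    have := (Finset.mem_filter.mp hx).2
    rw [hg]; simp only [this, MulChar.map_zero]
  have hsumneg : ∑ x ∈ Q'.filter (fun x => ¬ x ^ 3 + x ^ 2 + x + 1 = 0), g x
      = -((Q'.filter (fun x => ¬ x ^ 3 + x ^ 2 + x + 1 = 0)).card : ℤ) := by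
    have hpt : ∀ x ∈ Q'.filter (fun x => ¬ x ^ 3 + x ^ 2 + x + 1 = 0), g x = -1 := by
      intro x hx
      have hx' := Finset.mem_filter.mp hx
      have hne1 : ¬ g x = 1 := (Finset.mem_filter.mp hx'.1).2
      have hf0 : (x ^ 3 + x ^ 2 + x + 1 : ZMod ℓ) ≠ 0 := hx'.2
      rcases quadraticChar_dichotomy hf0 with h | h
      · exact absurd h hne1
      · exact h
    rw [Finset.sum_congr rfl hpt, Finset.sum_const, nsmul_eq_mul]
    ring
  have hsumQ' : ∑ x ∈ Q', g x
      = -((Q'.filter (fun x => ¬ x ^ 3 + x ^ 2 + x + 1 = 0)).card : ℤ) := by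
    rw [← Finset.sum_filter_add_sum_filter_not Q'
      (fun x => x ^ 3 + x ^ 2 + x + 1 = 0) g, hsum0, hsumneg, zero_add]
  have hcard2 : Q'.card = R.card
      + (Q'.filter (fun x => ¬ x ^ 3 + x ^ 2 + x + 1 = 0)).card := by
    rw [← hRQ']
    exact (Finset.card_filter_add_card_filter_not _).symm
  have hcard1 : Q.card = T.card + Q'.card := by
    rw [hTQ, hQ']
    exact (Finset.card_filter_add_card_filter_not _).symm
  have hsumQ : ∑ x ∈ Q, g x = ∑ x ∈ Q.filter (fun x => g x = 1), g x + ∑ x ∈ Q', g x := by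
    rw [hQ']
    exact (Finset.sum_filter_add_sum_filter_not Q (fun x => g x = 1) g).symm
  -- collect
  have hTeven := even_T (p := ℓ) hodd
  rw [← hT] at hTeven
  obtain ⟨t, ht⟩ := hTeven
  have hQcard := card_squares (p := ℓ) hodd
  rw [← hQ] at hQcard
  have hmain : (ℓ : ℤ) - (Npts ℓ : ℤ)
      = (Q.card : ℤ) - (R.card : ℤ) - 2 * (T.card : ℤ) := by
    rw [hN, hsplit, hsumQ, hsum1, hsumQ']
    have h2 := congrArg (fun n : ℕ => (n : ℤ)) hcard2
    have h1 := congrArg (fun n : ℕ => (n : ℤ)) hcard1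
    push_cast at h1 h2
    omega
  constructor
  · rintro (h8 | h8 | h8)
    · have hRcard : R.card = 3 := by rw [hR, hQ]; exact card_roots_three h8
      rw [Int.ModEq]
      omega
    · have hRcard : R.card = 0 := by rw [hR, hQ]; exact card_roots_zero (by omega)
      rw [Int.ModEq]
      omega
    · have hRcard : R.card = 1 := by rw [hR, hQ]; exact card_roots_one h8
      rw [Int.ModEq]
      omega
  · intro h8
    have hRcard : R.card = 0 := by rw [hR, hQ]; exact card_roots_zero (by omega)
    rw [Int.ModEq]
    omega
end

section
/- For every n ≥ 1, τ(n) is odd if and only if n = (2m+1)² for some integer m ≥ 0; equivalently, Δ ≡ Σ_{m≥0} q^{(2m+1)²} (mod 2) coefficientwise. -/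
open Polynomial Finset
namespace TauProof
abbrev K := ZMod 2
abbrev R := Polynomial K

/-- Gaussian binomial over GF(2) -/
noncomputable def Gb : ℕ → ℕ → R
  | _, 0 => 1
  | 0, _+1 => 0
  | n+1, k+1 => Gb n (k+1) + X^(n-k) * Gb n k
  termination_by n k => n

@[simp] lemma Gb_zero_right (n : ℕ) : Gb n 0 = 1 := by cases n <;> rw [Gb]

lemma Gb_pascal1 (n k : ℕ) : Gb (n+1) (k+1) = Gb n (k+1) + X^(n-k) * Gb n k := by
  rw [Gb]

lemma Gb_eq_zero {n k : ℕ} (h : n < k) : Gb n k = 0 := by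
  induction n generalizing k with
  | zero => cases k with
    | zero => omega
    | succ j => rw [Gb]
  | succ n ih =>
    cases k with
    | zero => omega
    | succ j =>
      rw [Gb_pascal1, ih (by omega), ih (by omega), mul_zero, add_zero]

@[simp] lemma Gb_self (n : ℕ) : Gb n n = 1 := by
  induction n with
  | zero => rw [Gb]
  | succ n ih =>
    rw [Gb_pascal1, Gb_eq_zero (by omega), ih, zero_add, Nat.sub_self, pow_zero, one_mul]

lemma Gb_pascal2 (n k : ℕ) : Gb (n+1) (k+1) = X^(k+1) * Gb n (k+1) + Gb n k := by
  induction n generalizing k with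
  | zero =>
    cases k with
    | zero =>
      rw [Gb_pascal1]
      simp [Gb_eq_zero (show (0:ℕ) < 1 by omega)]
    | succ j =>
      rw [Gb_eq_zero (show 1 < j+1+1 by omega), Gb_eq_zero (show (0:ℕ) < j+1+1 by omega),
        Gb_eq_zero (show (0:ℕ) < j+1 by omega)]
      ring
  | succ n ih =>
    by_cases hk : n + 1 < k
    · rw [Gb_eq_zero (by omega), Gb_eq_zero (by omega), Gb_eq_zero (by omega)]
      ring
    have h1 : Gb (n+1+1) (k+1) = (X^(k+1) * Gb n (k+1) + Gb n k) + X^(n+1-k) * Gb (n+1) k := by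
      rw [Gb_pascal1, ih k]
    rw [h1, Gb_pascal1 n k]
    cases k with
    | zero =>
      simp only [zero_add, pow_one, Gb_zero_right, mul_one, Nat.sub_zero]
      ring
    | succ j =>
      have key : Gb n (j+1) + X^(n-j) * Gb n j = X^(j+1) * Gb n (j+1) + Gb n j := by
        rw [← Gb_pascal1, ih j]
      by_cases hjn : j + 1 ≤ n
      · obtain ⟨e, rfl⟩ : ∃ e, n = j + 1 + e := ⟨n - (j+1), by omega⟩
        rw [Gb_pascal1 (j+1+e) j]
        rw [show j+1+e - j = e+1 by omega] at key ⊢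
        rw [show j+1+e+1 - (j+1) = e+1 by omega, show j+1+e - (j+1) = e by omega]
        linear_combination (X:R)^(e+1) * key
      · have hj : j = n := by omega
        subst hj
        rw [Gb_pascal1, Gb_eq_zero (show j < j + 1 by omega),
          Gb_eq_zero (show j < j + 1 + 1 by omega)]
        simp [Nat.sub_self]
        try ring

lemma Gb_symm {n k : ℕ} (h : k ≤ n) : Gb n (n - k) = Gb n k := by
  induction n generalizing k with
  | zero => interval_cases k; simp
  | succ n ih =>
    cases k with
    | zero => simp
    | succ j =>
      by_cases hj : j + 1 = n + 1
      · rw [hj]; simp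
      have hjn : j + 1 ≤ n := by omega
      have e1 : n + 1 - (j + 1) = (n - (j+1)) + 1 := by omega
      rw [e1, Gb_pascal2]
      have e4 : n - (j+1) + 1 = n - j := by omega
      rw [e4, ih hjn, ih (show j ≤ n by omega), Gb_pascal1]
      ring

/-- truncated congruence mod X^(M+1) -/
def Cong (M : ℕ) (p q : R) : Prop := X^(M+1) ∣ (p - q)

lemma Cong.refl (M) (p : R) : Cong M p p := by simp [Cong]

lemma Cong.symm {M} {p q : R} (h : Cong M p q) : Cong M q p := by
  have : q - p = -(p - q) := by ring
  rw [Cong, this]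
  exact dvd_neg.mpr h

lemma Cong.trans {M} {p q r : R} (h : Cong M p q) (h' : Cong M q r) : Cong M p r := by
  have : p - r = (p - q) + (q - r) := by ring
  rw [Cong, this]
  exact dvd_add h h'

lemma Cong.mul {M} {p q p' q' : R} (h : Cong M p q) (h' : Cong M p' q') :
    Cong M (p * p') (q * q') := by
  have e : p * p' - q * q' = (p - q) * p' + q * (p' - q') := by ring
  rw [Cong, e]
  exact dvd_add (h.mul_right p') (h'.mul_left q)

lemma Cong.add {M} {p q p' q' : R} (h : Cong M p q) (h' : Cong M p' q') :
    Cong M (p + p') (q + q') := by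
  have e : p + p' - (q + q') = (p - q) + (p' - q') := by ring
  rw [Cong, e]
  exact dvd_add h h'

lemma Cong.of_dvd {M} {p q : R} (h : X^(M+1) ∣ p) (h' : X^(M+1) ∣ q) : Cong M p q :=
  dvd_sub h h'

lemma Cong.coeff_eq {M} {p q : R} (h : Cong M p q) {j : ℕ} (hj : j ≤ M) :
    p.coeff j = q.coeff j := by
  have h2 := (Polynomial.X_pow_dvd_iff.mp h) j (by omega)
  rw [Polynomial.coeff_sub] at h2
  exact sub_eq_zero.mp h2

lemma cong_of_coeff_eq {M} {p q : R} (h : ∀ j ≤ M, p.coeff j = q.coeff j) : Cong M p q := by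
  rw [Cong, Polynomial.X_pow_dvd_iff]
  intro d hd
  rw [Polynomial.coeff_sub, h d (by omega), sub_self]

noncomputable def Dp (t : ℕ) : R := ∏ i ∈ range t, (1 + X^(i+1))
noncomputable def Sp (t : ℕ) : R := ∏ i ∈ range t, (1 + X^(2*i+1))

lemma Dp_succ (t : ℕ) : Dp (t+1) = Dp t * (1 + X^(t+1)) := Finset.prod_range_succ _ _
lemma Sp_succ (t : ℕ) : Sp (t+1) = Sp t * (1 + X^(2*t+1)) := Finset.prod_range_succ _ _
@[simp] lemma Dp_zero : Dp 0 = 1 := rfl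
@[simp] lemma Sp_zero : Sp 0 = 1 := rfl

lemma two_eq_zero_R : (2 : R) = 0 := CharTwo.two_eq_zero

lemma Gb_fact : ∀ n k : ℕ, k ≤ n → Gb n k * Dp k * Dp (n - k) = Dp n := by
  intro n
  induction n with
  | zero => intro k hk; interval_cases k; simp
  | succ n ih =>
    intro k hk
    cases k with
    | zero => simp
    | succ j =>
      by_cases hj : j + 1 = n + 1
      · have hj' : j = n := by omega
        subst hj'
        simp [Nat.sub_self]
      · have hjn : j + 1 ≤ n := by omega
        obtain ⟨e, rfl⟩ : ∃ e, n = j + 1 + e := ⟨n - (j+1), by omega⟩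
        have IH1 := ih (j+1) hjn
        have IH2 := ih j (by omega)
        rw [show j+1+e - (j+1) = e by omega] at IH1
        rw [show j+1+e - j = e+1 by omega] at IH2
        rw [Gb_pascal1, show j+1+e - j = e+1 by omega,
          show j+1+e+1 - (j+1) = e+1 by omega, Dp_succ (j+1+e)]
        have h2 := two_eq_zero_R
        have r1 : Dp (e+1) = Dp e * (1+X^(e+1)) := Dp_succ e
        have r2 : Dp (j+1) = Dp j * (1+X^(j+1)) := Dp_succ j
        linear_combination (1+X^(e+1)) * IH1 + X^(e+1) * (1+X^(j+1)) * IH2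
          + (Gb (j+1+e) (j+1) * Dp (j+1)) * r1
          + X^(e+1) * (Gb (j+1+e) j) * Dp (e+1) * r2
          + (Dp (j+1+e) * X^(e+1)) * h2


lemma stabA {M n k : ℕ} (h : M + 1 ≤ n + 1 - k) : Cong M (Gb (n+1) k) (Gb n k) := by
  cases k with
  | zero => simp [Cong]
  | succ j =>
    rw [Cong, Gb_pascal1, show Gb n (j+1) + X ^ (n - j) * Gb n j - Gb n (j+1)
      = X ^ (n - j) * Gb n j by ring]
    exact Dvd.dvd.mul_right (pow_dvd_pow X (by omega)) _

lemma stabB {M n k : ℕ} (h : M ≤ k) : Cong M (Gb (n+1) (k+1)) (Gb n k) := by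
  rw [Cong, Gb_pascal2, show X^(k+1) * Gb n (k+1) + Gb n k - Gb n k
    = X ^ (k+1) * Gb n (k+1) by ring]
  exact Dvd.dvd.mul_right (pow_dvd_pow X (by omega)) _

lemma stab_main (M : ℕ) : ∀ d e : ℕ, Cong M (Gb (2*M + d + e) (M + d)) (Gb (2*M) M) := by
  intro d
  induction d with
  | zero =>
    intro e
    induction e with
    | zero => exact Cong.refl _ _
    | succ e ihe =>
      refine Cong.trans ?_ ihe
      have : 2*M + 0 + (e+1) = (2*M + 0 + e) + 1 := by omega
      rw [this]
      exact stabA (by omega)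
  | succ d ihd =>
    intro e
    have : 2*M + (d+1) + e = (2*M + d + e) + 1 := by omega
    rw [this, show M + (d+1) = (M+d)+1 by omega]
    exact Cong.trans (stabB (by omega)) (ihd e)

lemma stab {M n k : ℕ} (h1 : M ≤ k) (h2 : k + M ≤ n) : Cong M (Gb n k) (Gb (2*M) M) := by
  obtain ⟨d, rfl⟩ : ∃ d, k = M + d := ⟨k - M, by omega⟩
  obtain ⟨e, rfl⟩ : ∃ e, n = 2*M + d + e := ⟨n - (2*M + d), by omega⟩
  exact stab_main M d e

/-- q-Vandermonde over GF(2) -/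
lemma VdM (m : ℕ) : ∀ n r : ℕ,
    Gb (m+n) r = ∑ j ∈ range (r+1), X^((m-j)*(r-j)) * Gb m j * Gb n (r-j) := by
  intro n
  induction n with
  | zero =>
    intro r
    rw [Finset.sum_eq_single r]
    · simp
    · intro j hj hne
      rw [Gb_eq_zero (show 0 < r - j by simp at hj; omega), mul_zero]
    · intro h
      exact absurd (self_mem_range_succ r) h
  | succ n ih =>
    intro r
    cases r with
    | zero => simp
    | succ s =>
      have expand_terms : ∀ j ∈ range (s+1),
          X^((m-j)*(s+1-j)) * Gb m j * Gb (n+1) (s+1-j)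
          = X^((m-j)*(s+1-j)) * Gb m j * Gb n (s+1-j)
            + X^(m+n-s) * (X^((m-j)*(s-j)) * Gb m j * Gb n (s-j)) := by
        intro j hj
        have hjs : j ≤ s := by simp at hj; omega
        rw [show s+1-j = (s-j)+1 by omega, Gb_pascal1]
        by_cases h0 : Gb m j = 0
        · simp [h0]
        by_cases h1 : Gb n (s-j) = 0
        · simp [h1]
        have hjm : j ≤ m := by
          by_contra hc
          exact h0 (Gb_eq_zero (by omega))
        have hsn : s - j ≤ n := by
          by_contra hc
          exact h1 (Gb_eq_zero (by omega))
        have e0 : (m-j)*((s-j)+1) = (m-j)*(s-j) + (m-j) := by ring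
        have ee : (m-j)*((s-j)+1) + (n-(s-j)) = (m+n-s) + (m-j)*(s-j) := by omega
        calc X^((m-j)*((s-j)+1)) * Gb m j * (Gb n (s-j+1) + X^(n-(s-j)) * Gb n (s-j))
            = X^((m-j)*((s-j)+1)) * Gb m j * Gb n ((s-j)+1)
              + X^((m-j)*((s-j)+1) + (n-(s-j))) * Gb m j * Gb n (s-j) := by
              rw [pow_add]; ring
          _ = _ := by rw [ee, pow_add]; ring
      rw [Finset.sum_range_succ, Finset.sum_congr rfl expand_terms, Finset.sum_add_distrib]
      have hC : X^((m-(s+1))*(s+1-(s+1))) * Gb m (s+1) * Gb (n+1) (s+1-(s+1)) = Gb m (s+1) := by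
        simp [Nat.sub_self]
      rw [hC, show m + (n+1) = (m+n)+1 by omega, Gb_pascal1, ih (s+1), ih s,
        Finset.sum_range_succ, Finset.mul_sum]
      simp only [Nat.sub_self, mul_zero, pow_zero, Gb_zero_right, mul_one, one_mul]
      ring


noncomputable def E4 : R →+* R := (Polynomial.expand K 4).toRingHom
noncomputable def E2 : R →+* R := (Polynomial.expand K 2).toRingHom

@[simp] lemma E4_X_pow (a : ℕ) : E4 (X^a) = X^(4*a) := by
  rw [E4, map_pow]
  simp [Polynomial.expand_X, ← pow_mul, mul_comm]

@[simp] lemma E2_X_pow (a : ℕ) : E2 (X^a) = X^(2*a) := by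
  rw [E2, map_pow]
  simp [Polynomial.expand_X, ← pow_mul, mul_comm]

@[simp] lemma E4_one : E4 1 = 1 := map_one _
@[simp] lemma E2_one : E2 1 = 1 := map_one _

/-- exponent for the q-binomial theorem -/
def qe (c k : ℕ) : ℕ := c*k + 2*(k*(k-1))

lemma qe_succ (c k : ℕ) : qe c (k+1) = qe c k + (c + 4*k) := by
  cases k with
  | zero => simp [qe]
  | succ j =>
    simp only [qe, Nat.succ_sub_one]
    ring

/-- q-binomial theorem over GF(2), base q^4 -/
lemma QBT (c : ℕ) : ∀ m : ℕ,
    ∏ j ∈ range m, (1 + X^(c+4*j)) = ∑ k ∈ range (m+1), X^(qe c k) * E4 (Gb m k) := by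
  intro m
  induction m with
  | zero => simp [qe]
  | succ m ih =>
    rw [Finset.prod_range_succ, ih]
    have hterm : ∀ k ∈ range (m+1),
        X^(qe c (k+1)) * E4 (Gb (m+1) (k+1))
        = X^(qe c (k+1)) * E4 (Gb m (k+1)) + X^(c+4*m) * (X^(qe c k) * E4 (Gb m k)) := by
      intro k hk
      have hk' : k ≤ m := by simp at hk; omega
      rw [Gb_pascal1, map_add, map_mul, E4_X_pow]
      have he : qe c (k+1) + 4*(m-k) = (c+4*m) + qe c k := by
        have := qe_succ c k
        omega
      calc X^(qe c (k+1)) * (E4 (Gb m (k+1)) + X^(4*(m-k)) * E4 (Gb m k))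
          = X^(qe c (k+1)) * E4 (Gb m (k+1))
            + X^(qe c (k+1) + 4*(m-k)) * E4 (Gb m k) := by rw [pow_add]; ring
        _ = _ := by rw [he, pow_add]; ring
    have hfirst : (∑ k ∈ range (m+1), X^(qe c (k+1)) * E4 (Gb m (k+1))) + X^(qe c 0) * E4 (Gb m 0)
        = ∑ k ∈ range (m+1), X^(qe c k) * E4 (Gb m k) := by
      rw [← Finset.sum_range_succ' (fun k => X^(qe c k) * E4 (Gb m k)) (m+1),
        Finset.sum_range_succ, Gb_eq_zero (show m < m+1 by omega)]
      simp
    have rhs_eq : ∑ k ∈ range (m+1+1), X^(qe c k) * E4 (Gb (m+1) k)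
        = (∑ k ∈ range (m+1), X^(qe c k) * E4 (Gb m k))
          + X^(c+4*m) * ∑ k ∈ range (m+1), X^(qe c k) * E4 (Gb m k) := by
      rw [Finset.sum_range_succ' (fun k => X^(qe c k) * E4 (Gb (m+1) k)) (m+1),
        Finset.sum_congr rfl hterm, Finset.sum_add_distrib,
        show E4 (Gb (m+1) 0) = E4 (Gb m 0) by simp, ← Finset.mul_sum]
      linear_combination hfirst
    rw [rhs_eq]
    ring


lemma sum_triangle_comm (f : ℕ → ℕ → R) : ∀ n,
    ∑ a ∈ range n, ∑ k ∈ range (n-a), f a k = ∑ k ∈ range n, ∑ a ∈ range (n-k), f a k := by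
  have step : ∀ (n : ℕ) (g : ℕ → ℕ → R), ∑ a ∈ range (n+1), ∑ k ∈ range (n+1-a), g a k
      = (∑ a ∈ range n, ∑ k ∈ range (n-a), g a k) + ∑ a ∈ range (n+1), g a (n-a) := by
    intro n g
    have h1 : ∀ a ∈ range (n+1), ∑ k ∈ range (n+1-a), g a k
        = (∑ k ∈ range (n-a), g a k) + g a (n-a) := by
      intro a ha
      rw [show n+1-a = (n-a)+1 by simp at ha; omega, Finset.sum_range_succ]
    rw [Finset.sum_congr rfl h1, Finset.sum_add_distrib,
      Finset.sum_range_succ (fun a => ∑ k ∈ range (n-a), g a k)]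
    simp [Nat.sub_self]
  intro n
  induction n with
  | zero => simp
  | succ n ih =>
    rw [step n f, ih, step n (fun k a => f a k)]
    congr 1
    rw [← Finset.sum_range_reflect (fun a => f a (n-a)) (n+1)]
    refine Finset.sum_congr rfl ?_
    intro j hj
    have hj' : j ≤ n := by simp at hj; omega
    congr 1 <;> omega

lemma Sp_split : ∀ L, Sp (2*L)
    = (∏ j ∈ range L, (1+X^(1+4*j))) * ∏ j ∈ range L, (1+X^(3+4*j)) := by
  intro L
  induction L with
  | zero => simp [Sp]
  | succ L ih =>
    rw [show 2*(L+1) = (2*L+1)+1 by ring, Sp_succ, Sp_succ, ih,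
      Finset.prod_range_succ, Finset.prod_range_succ,
      show 2*(2*L)+1 = 1+4*L by ring, show 2*(2*L+1)+1 = 3+4*L by ring]
    ring

/-- reflected q-Vandermonde -/
lemma VdM2 {L k : ℕ} (hk : k ≤ L) :
    ∑ a ∈ range (L+1-k), X^(4*(a*(a+k))) * (E4 (Gb L a) * E4 (Gb L (a+k)))
    = E4 (Gb (2*L) (L+k)) := by
  have base : ∑ a ∈ range (L+1-k), X^(a*(a+k)) * (Gb L a * Gb L (a+k)) = Gb (2*L) (L+k) := by
    have h1 := VdM L L (L+k)
    rw [show L + L = 2*L by ring] at h1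
    have h2 : ∑ j ∈ range (L+k+1), X^((L-j)*(L+k-j)) * Gb L j * Gb L (L+k-j)
        = ∑ j ∈ range (L+1), X^((L-j)*(L+k-j)) * Gb L j * Gb L (L+k-j) := by
      refine (Finset.sum_subset ?_ ?_).symm
      · intro x hx
        simp at hx ⊢
        omega
      · intro x hx hx'
        rw [Gb_eq_zero (show L < x by simp at hx hx'; omega)]
        ring
    have h3 : ∑ j ∈ range (L+1), X^((L-j)*(L+k-j)) * Gb L j * Gb L (L+k-j)
        = ∑ a ∈ range (L+1), X^(a*(a+k)) * (Gb L a * Gb L (a+k)) := by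
      rw [← Finset.sum_range_reflect
        (fun a => X^(a*(a+k)) * (Gb L a * Gb L (a+k))) (L+1)]
      refine Finset.sum_congr rfl ?_
      intro j hj
      have hj' : j ≤ L := by simp at hj; omega
      rw [show L+1-1-j = L - j by omega, show L - j + k = L+k-j by omega, Gb_symm hj']
      ring
    have h4 : ∑ a ∈ range (L+1), X^(a*(a+k)) * (Gb L a * Gb L (a+k))
        = ∑ a ∈ range (L+1-k), X^(a*(a+k)) * (Gb L a * Gb L (a+k)) := by
      refine (Finset.sum_subset ?_ ?_).symm
      · intro x hx
        simp at hx ⊢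
        omega
      · intro x hx hx'
        rw [Gb_eq_zero (show L < x + k by simp at hx hx'; omega)]
        ring
    rw [h1, h2, h3, h4]
  calc ∑ a ∈ range (L+1-k), X^(4*(a*(a+k))) * (E4 (Gb L a) * E4 (Gb L (a+k)))
      = E4 (∑ a ∈ range (L+1-k), X^(a*(a+k)) * (Gb L a * Gb L (a+k))) := by
        rw [map_sum]
        refine Finset.sum_congr rfl ?_
        intro a _
        rw [map_mul, map_mul, E4_X_pow]
    _ = _ := by rw [base]

lemma qe_exp1 (a k : ℕ) : qe 1 a + qe 3 (a+k) = k*(2*k+1) + 4*(a*(a+k)) := by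
  cases a with
  | zero =>
    cases k with
    | zero => simp [qe]
    | succ j =>
      simp only [qe, Nat.succ_sub_one, Nat.zero_add, Nat.add_zero, Nat.mul_zero, Nat.zero_mul]
      ring
  | succ i =>
    simp only [qe, Nat.succ_sub_one, show i+1+k-1 = i+k by omega]
    ring

lemma qe_exp2 (b i : ℕ) : qe 1 (b+(i+1)) + qe 3 b = (i+1)*(2*i+1) + 4*(b*(b+(i+1))) := by
  cases b with
  | zero =>
    simp only [qe, Nat.succ_sub_one, Nat.zero_add, Nat.add_zero, Nat.mul_zero, Nat.zero_mul]
    ring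
  | succ j =>
    simp only [qe, Nat.succ_sub_one, show j+1+(i+1)-1 = j+i+1 by omega,
      show j+1+(i+1) = j+i+2 by omega]
    ring

/-- finite Jacobi triple product instance over GF(2) -/
lemma JTPfin (L : ℕ) : Sp (2*L)
    = ∑ k ∈ range (L+1), X^(k*(2*k+1)) * E4 (Gb (2*L) (L+k))
      + ∑ i ∈ range L, X^((i+1)*(2*i+1)) * E4 (Gb (2*L) (L+(i+1))) := by
  rw [Sp_split, QBT 1 L, QBT 3 L, Finset.sum_mul_sum]
  have inner_split : ∀ a ∈ range (L+1),
      ∑ b ∈ range (L+1), (X^(qe 1 a) * E4 (Gb L a)) * (X^(qe 3 b) * E4 (Gb L b))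
      = (∑ k ∈ range (L+1-a), (X^(qe 1 a) * E4 (Gb L a)) * (X^(qe 3 (a+k)) * E4 (Gb L (a+k))))
        + ∑ b ∈ range a, (X^(qe 1 a) * E4 (Gb L a)) * (X^(qe 3 b) * E4 (Gb L b)) := by
    intro a ha
    have ha' : a ≤ L := by simp at ha; omega
    rw [Finset.range_eq_Ico,
      ← Finset.sum_Ico_consecutive _ (Nat.zero_le a) (by omega : a ≤ L+1),
      Finset.sum_Ico_eq_sum_range]
    simp only [Nat.add_zero, Nat.zero_add, Nat.sub_zero]
    rw [add_comm, Finset.sum_Ico_eq_sum_range]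
  rw [Finset.sum_congr rfl inner_split, Finset.sum_add_distrib]
  congr 1
  · -- diagonal & above: P1
    have tri := sum_triangle_comm
      (fun a k => (X^(qe 1 a) * E4 (Gb L a)) * (X^(qe 3 (a+k)) * E4 (Gb L (a+k)))) (L+1)
    rw [tri]
    refine Finset.sum_congr rfl ?_
    intro k hk
    have hk' : k ≤ L := by simp at hk; omega
    rw [← VdM2 hk', Finset.mul_sum]
    refine Finset.sum_congr rfl ?_
    intro a _
    calc (X^(qe 1 a) * E4 (Gb L a)) * (X^(qe 3 (a+k)) * E4 (Gb L (a+k)))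
        = X^(qe 1 a + qe 3 (a+k)) * (E4 (Gb L a) * E4 (Gb L (a+k))) := by
          rw [pow_add]; ring
      _ = _ := by rw [qe_exp1 a k, pow_add]; ring
  · -- strictly below diagonal: P2
    rw [Finset.sum_range_succ']
    simp only [Finset.range_zero, Finset.sum_empty, add_zero]
    rw [← Finset.sum_range_reflect]
    have hre : ∀ a ∈ range L, ∑ b ∈ range ((L-1-a)+1),
        (X^(qe 1 ((L-1-a)+1)) * E4 (Gb L ((L-1-a)+1))) * (X^(qe 3 b) * E4 (Gb L b))
        = ∑ b ∈ range (L-a),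
        (X^(qe 1 (L-a)) * E4 (Gb L (L-a))) * (X^(qe 3 b) * E4 (Gb L b)) := by
      intro a ha
      have ha' : a < L := by simpa using ha
      rw [show (L-1-a)+1 = L-a by omega]
    rw [Finset.sum_congr rfl hre]
    have tri := sum_triangle_comm
      (fun a b => (X^(qe 1 (L-a)) * E4 (Gb L (L-a))) * (X^(qe 3 b) * E4 (Gb L b))) L
    rw [tri]
    have hre2 : ∀ b ∈ range L, ∑ a ∈ range (L-b),
        (X^(qe 1 (L-a)) * E4 (Gb L (L-a))) * (X^(qe 3 b) * E4 (Gb L b))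
        = ∑ i ∈ range (L-b),
        (X^(qe 1 (b+(i+1))) * E4 (Gb L (b+(i+1)))) * (X^(qe 3 b) * E4 (Gb L b)) := by
      intro b hb
      have hb' : b < L := by simpa using hb
      rw [← Finset.sum_range_reflect (fun i => (X^(qe 1 (b+(i+1))) * E4 (Gb L (b+(i+1))))
        * (X^(qe 3 b) * E4 (Gb L b))) (L-b)]
      refine Finset.sum_congr rfl ?_
      intro a ha
      have ha' : a < L - b := by simpa using ha
      rw [show b + (L-b-1-a+1) = L - a by omega]
    rw [Finset.sum_congr rfl hre2]
    have tri2 := sum_triangle_comm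
      (fun b i => (X^(qe 1 (b+(i+1))) * E4 (Gb L (b+(i+1)))) * (X^(qe 3 b) * E4 (Gb L b))) L
    rw [tri2]
    refine Finset.sum_congr rfl ?_
    intro i hi
    have hi' : i < L := by simpa using hi
    have hv := VdM2 (show i+1 ≤ L by omega)
    rw [show L+1-(i+1) = L-i by omega] at hv
    rw [← hv, Finset.mul_sum]
    refine Finset.sum_congr rfl ?_
    intro b _
    calc (X^(qe 1 (b+(i+1))) * E4 (Gb L (b+(i+1)))) * (X^(qe 3 b) * E4 (Gb L b))
        = X^(qe 1 (b+(i+1)) + qe 3 b) * (E4 (Gb L b) * E4 (Gb L (b+(i+1)))) := by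
          rw [pow_add]; ring
      _ = _ := by rw [qe_exp2 b i, pow_add]; ring


lemma prod_one_dvd (c : ℕ) (s : Finset ℕ) (g : ℕ → ℕ) (h : ∀ i ∈ s, c ≤ g i) :
    (X : R)^c ∣ ((∏ i ∈ s, (1+X^(g i))) - 1) := by
  classical
  induction s using Finset.induction with
  | empty => rw [Finset.prod_empty, sub_self]; exact dvd_zero _
  | @insert a s' hx ih =>
    rw [Finset.prod_insert hx]
    have hd : (X:R)^c ∣ ((∏ i ∈ s', (1+X^(g i))) - 1) := ih (fun i hi => h i (by simp [hi]))
    have ha : c ≤ g a := h a (by simp)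
    have heq : (1+(X:R)^(g a)) * (∏ i ∈ s', (1+X^(g i))) - 1
        = ((∏ i ∈ s', (1+X^(g i))) - 1) + X^(g a) * (∏ i ∈ s', (1+X^(g i))) := by ring
    rw [heq]
    exact dvd_add hd (Dvd.dvd.mul_right (pow_dvd_pow X ha) _)

lemma Dp_ext {M t t' : ℕ} (h1 : M ≤ t) (h2 : t ≤ t') : Cong M (Dp t') (Dp t) := by
  have hsplit : Dp t' = Dp t * ∏ i ∈ Ico t t', (1+X^(i+1)) := by
    simp only [Dp, Finset.range_eq_Ico]
    exact (Finset.prod_Ico_consecutive _ (Nat.zero_le t) h2).symm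
  rw [Cong, hsplit, show Dp t * (∏ i ∈ Ico t t', (1+X^(i+1))) - Dp t
    = Dp t * ((∏ i ∈ Ico t t', (1+X^(i+1))) - 1) by ring]
  exact Dvd.dvd.mul_left
    (prod_one_dvd _ _ _ (fun i hi => by simp at hi; omega)) _

lemma Sp_ext {M t t' : ℕ} (h1 : M ≤ 2*t) (h2 : t ≤ t') : Cong M (Sp t') (Sp t) := by
  have hsplit : Sp t' = Sp t * ∏ i ∈ Ico t t', (1+X^(2*i+1)) := by
    simp only [Sp, Finset.range_eq_Ico]
    exact (Finset.prod_Ico_consecutive _ (Nat.zero_le t) h2).symm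
  rw [Cong, hsplit, show Sp t * (∏ i ∈ Ico t t', (1+X^(2*i+1))) - Sp t
    = Sp t * ((∏ i ∈ Ico t t', (1+X^(2*i+1))) - 1) by ring]
  exact Dvd.dvd.mul_left
    (prod_one_dvd _ _ _ (fun i hi => by simp at hi; omega)) _

lemma frob_id : frobenius K 2 = RingHom.id K := by
  ext a
  exact ZMod.pow_card a

lemma sq (f : R) : f^2 = E2 f := by
  have h := Polynomial.map_frobenius_expand 2 f
  rw [frob_id, Polynomial.map_id] at h
  rw [← h, E2]
  rfl

lemma E2_E2 (f : R) : E2 (E2 f) = E4 f := by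
  show Polynomial.expand K 2 (Polynomial.expand K 2 f) = Polynomial.expand K 4 f
  rw [Polynomial.expand_expand]
  all_goals norm_num

lemma E2_E4 (f : R) : E2 (E4 f) = E4 (E2 f) := by
  show Polynomial.expand K 2 (Polynomial.expand K 4 f) = Polynomial.expand K 4 (Polynomial.expand K 2 f)
  rw [Polynomial.expand_expand, Polynomial.expand_expand]
  all_goals norm_num

lemma E2_cong {M M' : ℕ} {p q : R} (h : Cong M p q) (h' : M' + 1 ≤ 2*(M+1)) :
    Cong M' (E2 p) (E2 q) := by
  rw [Cong] at h ⊢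
  have : E2 (p - q) = E2 p - E2 q := map_sub _ _ _
  rw [← this]
  refine dvd_trans (pow_dvd_pow X h') ?_
  have hx : (X:R)^(2*(M+1)) = E2 (X^(M+1)) := by rw [E2_X_pow]
  rw [hx]
  exact map_dvd E2 h

lemma E4_cong {M M' : ℕ} {p q : R} (h : Cong M p q) (h' : M' + 1 ≤ 4*(M+1)) :
    Cong M' (E4 p) (E4 q) := by
  rw [Cong] at h ⊢
  have : E4 (p - q) = E4 p - E4 q := map_sub _ _ _
  rw [← this]
  refine dvd_trans (pow_dvd_pow X h') ?_
  have hx : (X:R)^(4*(M+1)) = E4 (X^(M+1)) := by rw [E4_X_pow]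
  rw [hx]
  exact map_dvd E4 h

lemma Dp_even : ∀ t, Dp (2*t) = Sp t * E2 (Dp t) := by
  intro t
  induction t with
  | zero => simp [Dp, Sp]
  | succ t ih =>
    rw [show 2*(t+1) = (2*t+1)+1 by ring, Dp_succ, Dp_succ, ih, Sp_succ, Dp_succ,
      map_mul, map_add, E2_X_pow, E2_one]
    rw [show 2*t+1+1 = 2*(t+1) by ring]
    ring

lemma coeff_zero_Dp (t : ℕ) : (Dp t).coeff 0 = 1 := by
  rw [Polynomial.coeff_zero_eq_eval_zero, Dp, Polynomial.eval_prod]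
  rw [Finset.prod_eq_one]
  intro i _
  simp

lemma coeff_zero_Sp (t : ℕ) : (Sp t).coeff 0 = 1 := by
  rw [Polynomial.coeff_zero_eq_eval_zero, Sp, Polynomial.eval_prod]
  rw [Finset.prod_eq_one]
  intro i _
  simp

lemma E2_coeff (f : R) (n : ℕ) : (E2 f).coeff n = if 2 ∣ n then f.coeff (n/2) else 0 :=
  Polynomial.coeff_expand (by norm_num) f n

/-- the key unit lemma: Sp t * Dp t ≡ 1 mod X^(t+1) -/
lemma SpDp_one : ∀ t, Cong t (Sp t * Dp t) 1 := by
  intro t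
  set v := Sp t * Dp t with hv
  have hEq : Cong t (E2 v) v := by
    have h1 : E2 v = Sp t * Dp (2*t) := by
      rw [hv, map_mul, ← sq, ← sq, Dp_even]
      have : Sp t ^ 2 = Sp t * Sp t := by ring
      rw [← sq, this]
      ring
    rw [h1]
    exact Cong.mul (Cong.refl t (Sp t)) (Dp_ext (le_refl t) (by omega))
  have hzero : ∀ j, 1 ≤ j → j ≤ t → v.coeff j = 0 := by
    intro j
    induction j using Nat.strong_induction_on with
    | _ j ih =>
      intro hj1 hjt
      have := (hEq.coeff_eq hjt).symm
      rw [E2_coeff] at this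
      by_cases h2 : 2 ∣ j
      · rw [if_pos h2] at this
        rw [this]
        exact ih (j/2) (by omega) (by omega) (by omega)
      · rw [if_neg h2] at this
        exact this
  have hc0 : v.coeff 0 = 1 := by
    rw [hv, Polynomial.coeff_zero_eq_eval_zero, Polynomial.eval_mul,
      ← Polynomial.coeff_zero_eq_eval_zero, ← Polynomial.coeff_zero_eq_eval_zero,
      coeff_zero_Dp, coeff_zero_Sp, one_mul]
  refine cong_of_coeff_eq ?_
  intro j hj
  rw [Polynomial.coeff_one]
  by_cases hj0 : j = 0
  · rw [if_pos hj0, hj0, hc0]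
  · rw [if_neg hj0]
    exact hzero j (by omega) hj

lemma cong_cancel {M : ℕ} {u p q : R} (hu : u.coeff 0 = 1) (h : Cong M (p*u) (q*u)) :
    Cong M p q := by
  rw [Cong] at h ⊢
  have hd : X^(M+1) ∣ (p - q) * u := by
    have : (p - q) * u = p*u - q*u := by ring
    rw [this]
    exact h
  set d := p - q with hdd
  rw [Polynomial.X_pow_dvd_iff] at hd ⊢
  intro j hj
  induction j using Nat.strong_induction_on with
  | _ j ih =>
    have hmul := hd j hj
    rw [Polynomial.coeff_mul] at hmul
    rw [Finset.sum_eq_single (j, 0)] at hmul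
    · rw [hu, mul_one] at hmul
      exact hmul
    · intro b hb hbne
      have hb' : b.1 + b.2 = j := Finset.HasAntidiagonal.mem_antidiagonal.mp hb
      have hb1 : b.1 < j := by
        rcases Nat.lt_or_ge b.1 j with h' | h'
        · exact h'
        · exfalso
          apply hbne
          have : b.1 = j := by omega
          have : b.2 = 0 := by omega
          exact Prod.ext (by omega) this
      rw [ih b.1 hb1 (by omega), zero_mul]
    · intro hmem
      exact absurd (Finset.HasAntidiagonal.mem_antidiagonal.mpr (by omega)) hmem


lemma Cong.sum {M : ℕ} {ι : Type*} {s : Finset ι} {f g : ι → R}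
    (h : ∀ i ∈ s, Cong M (f i) (g i)) :
    Cong M (∑ i ∈ s, f i) (∑ i ∈ s, g i) := by
  rw [Cong, ← Finset.sum_sub_distrib]
  exact Finset.dvd_sum (fun i hi => h i hi)

/-- the completed Gauss-square congruence: `Sp(2L) ≡ ψ · R4`. -/
lemma master (M : ℕ) :
    Cong M (Sp (2*(2*M+2)))
      ((∑ k ∈ range (2*M+2+1), (X:R)^(k*(2*k+1))
        + ∑ i ∈ range (2*M+2), (X:R)^((i+1)*(2*i+1))) * E4 (Gb (2*M) M)) := by
  rw [JTPfin (2*M+2), add_mul, Finset.sum_mul, Finset.sum_mul]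
  refine Cong.add (Cong.sum ?_) (Cong.sum ?_)
  · intro k hk
    by_cases hkM : k ≤ M
    · refine Cong.mul (Cong.refl _ _) (E4_cong (stab (by omega) (by omega)) (by omega))
    · refine Cong.of_dvd ?_ ?_ <;>
      · refine Dvd.dvd.mul_right (pow_dvd_pow X ?_) _
        have : k ≤ k*(2*k+1) := Nat.le_mul_of_pos_right k (by omega)
        omega
  · intro i hi
    by_cases hiM : i + 1 ≤ M
    · refine Cong.mul (Cong.refl _ _) (E4_cong (stab (by omega) (by omega)) (by omega))
    · refine Cong.of_dvd ?_ ?_ <;>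
      · refine Dvd.dvd.mul_right (pow_dvd_pow X ?_) _
        have : i+1 ≤ (i+1)*(2*i+1) := Nat.le_mul_of_pos_right (i+1) (by omega)
        omega

lemma E4_coeff (f : R) (n : ℕ) : (E4 f).coeff n = if 4 ∣ n then f.coeff (n/4) else 0 :=
  Polynomial.coeff_expand (by norm_num) f n

/-- the core result: `(Dp N)³ ≡ ψ mod X^(M+1)` -/
lemma core (M : ℕ) :
    Cong M ((Dp (2*(2*M+2)))^3)
      (∑ k ∈ range (2*M+2+1), (X:R)^(k*(2*k+1))
        + ∑ i ∈ range (2*M+2), (X:R)^((i+1)*(2*i+1))) := by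
  set L : ℕ := 2*M+2 with hLdef
  set psi : R := ∑ k ∈ range (L+1), (X:R)^(k*(2*k+1))
        + ∑ i ∈ range L, (X:R)^((i+1)*(2*i+1)) with hpsi
  set U : R := E4 (Dp (2*M)) with hU
  set W : R := E2 (E4 (Dp M)) with hW
  have fact4 : E4 (Gb (2*M) M) * (E4 (Dp M) * E4 (Dp M)) = U := by
    rw [hU, ← map_mul, ← map_mul]
    congr 1
    have hf := Gb_fact (2*M) M (by omega)
    rw [show 2*M - M = M by omega] at hf
    rw [← hf]
    ring
  have hWW : E4 (Dp M) * E4 (Dp M) = W := by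
    rw [show E4 (Dp M) * E4 (Dp M) = (E4 (Dp M))^2 by ring, sq, hW]
  have hA : Cong M (Sp (2*L) * W) (psi * U) := by
    have h1 := (master M).mul (Cong.refl M (E4 (Dp M) * E4 (Dp M)))
    rw [show (psi * E4 (Gb (2*M) M)) * (E4 (Dp M) * E4 (Dp M)) = psi * U by
      rw [← fact4]; ring] at h1
    rw [hWW] at h1
    exact h1
  have hF : (Dp (2*L))^3 = Sp L * E4 (Dp L) * (E2 (Sp L) * E2 (Dp L)) := by
    have h3 : (Dp (2*L))^3 = Dp (2*L) * (Dp (2*L))^2 := by ring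
    rw [h3, sq (Dp (2*L)), Dp_even L, map_mul, E2_E2]
    ring
  have hv2 : Cong M (E2 (Sp L) * E2 (Dp L)) 1 := by
    have h' := E2_cong (SpDp_one L) (show M+1 ≤ 2*(L+1) by omega)
    rw [map_mul, map_one] at h'
    exact h'
  have hDL : Cong M (E4 (Dp L)) (E4 (Dp M)) :=
    E4_cong (Dp_ext (le_refl M) (by omega)) (by omega)
  have hUsplit : U = E4 (Sp M) * W := by
    rw [hU, Dp_even M, map_mul, ← E2_E4, hW]
  have hvM : Cong M (E4 (Sp M) * E4 (Dp M)) 1 := by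
    have h' := E4_cong (SpDp_one M) (show M+1 ≤ 4*(M+1) by omega)
    rw [map_mul, map_one] at h'
    exact h'
  have hSp : Cong M (Sp L) (Sp (2*L)) :=
    (Sp_ext (show M ≤ 2*L by omega) (by omega)).symm
  have hFU : Cong M ((Dp (2*L))^3 * U) (psi * U) := by
    rw [hF]
    have s1 : Cong M (Sp L * E4 (Dp L) * (E2 (Sp L) * E2 (Dp L)) * U)
        (Sp L * E4 (Dp M) * 1 * U) :=
      Cong.mul (Cong.mul (Cong.mul (Cong.refl _ _) hDL) hv2) (Cong.refl _ _)
    refine s1.trans ?_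
    rw [mul_one]
    refine Cong.trans ?_ hA
    rw [hUsplit,
      show Sp L * E4 (Dp M) * (E4 (Sp M) * W) = Sp L * (E4 (Sp M) * E4 (Dp M)) * W by ring]
    refine Cong.trans (Cong.mul (Cong.mul hSp hvM) (Cong.refl _ W)) ?_
    rw [mul_one]
    exact Cong.refl _ _
  have hu1 : U.coeff 0 = 1 := by
    rw [hU, E4_coeff]
    rw [if_pos (dvd_zero 4)]
    simpa using coeff_zero_Dp (2*M)
  exact cong_cancel hu1 hFU


lemma sqr_inj {a b : ℕ} (h : a^2 = b^2) : a = b :=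
  Nat.pow_left_injective (by norm_num) h

lemma v1_sq (k : ℕ) : 8*(k*(2*k+1)) + 1 = (4*k+1)^2 := by ring
lemma v2_sq (i : ℕ) : 8*((i+1)*(2*i+1)) + 1 = (4*i+3)^2 := by ring

lemma v1_inj {k k' : ℕ} (h : k*(2*k+1) = k'*(2*k'+1)) : k = k' := by
  have h2 : (4*k+1)^2 = (4*k'+1)^2 := by
    rw [← v1_sq, ← v1_sq, h]
  have := sqr_inj h2
  omega

lemma v2_inj {i i' : ℕ} (h : (i+1)*(2*i+1) = (i'+1)*(2*i'+1)) : i = i' := by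
  have h2 : (4*i+3)^2 = (4*i'+3)^2 := by
    rw [← v2_sq, ← v2_sq, h]
  have := sqr_inj h2
  omega

lemma v1_ne_v2 {k i : ℕ} (h : k*(2*k+1) = (i+1)*(2*i+1)) : False := by
  have h2 : (4*k+1)^2 = (4*i+3)^2 := by
    rw [← v1_sq, ← v2_sq, h]
  have := sqr_inj h2
  omega

lemma psi_coeff (M m : ℕ) (hm : m ≤ M) :
    ((∑ k ∈ range (2*M+2+1), (X:R)^(k*(2*k+1))
      + ∑ i ∈ range (2*M+2), (X:R)^((i+1)*(2*i+1))).coeff m = 1)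
    ↔ ((∃ k, m = k*(2*k+1)) ∨ (∃ i, m = (i+1)*(2*i+1))) := by
  rw [Polynomial.coeff_add, Polynomial.finset_sum_coeff, Polynomial.finset_sum_coeff]
  simp only [Polynomial.coeff_X_pow]
  by_cases h1 : ∃ k, m = k*(2*k+1)
  · obtain ⟨k₀, hk₀⟩ := h1
    have hk₀M : k₀ < 2*M+2+1 := by
      have : k₀ ≤ k₀*(2*k₀+1) := Nat.le_mul_of_pos_right k₀ (by omega)
      omega
    have hsum1 : (∑ k ∈ range (2*M+2+1), if m = k*(2*k+1) then (1:K) else 0) = 1 := by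
      rw [Finset.sum_eq_single k₀]
      · rw [if_pos hk₀]
      · intro b _ hbne
        rw [if_neg]
        intro hc
        exact hbne (v1_inj (by omega)).symm
      · intro hmem
        exact absurd (Finset.mem_range.mpr hk₀M) hmem
    have hsum2 : (∑ i ∈ range (2*M+2), if m = (i+1)*(2*i+1) then (1:K) else 0) = 0 := by
      refine Finset.sum_eq_zero ?_
      intro i _
      rw [if_neg]
      intro hc
      exact v1_ne_v2 (k := k₀) (i := i) (by omega)
    rw [hsum1, hsum2]
    simp only [add_zero]
    constructor
    · intro _
      exact Or.inl ⟨k₀, hk₀⟩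
    · intro _
      trivial
  · by_cases h2 : ∃ i, m = (i+1)*(2*i+1)
    · obtain ⟨i₀, hi₀⟩ := h2
      have hi₀M : i₀ < 2*M+2 := by
        have : i₀+1 ≤ (i₀+1)*(2*i₀+1) := Nat.le_mul_of_pos_right (i₀+1) (by omega)
        omega
      have hsum1 : (∑ k ∈ range (2*M+2+1), if m = k*(2*k+1) then (1:K) else 0) = 0 := by
        refine Finset.sum_eq_zero ?_
        intro k _
        rw [if_neg]
        intro hc
        exact h1 ⟨k, hc⟩
      have hsum2 : (∑ i ∈ range (2*M+2), if m = (i+1)*(2*i+1) then (1:K) else 0) = 1 := by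
        rw [Finset.sum_eq_single i₀]
        · rw [if_pos hi₀]
        · intro b _ hbne
          rw [if_neg]
          intro hc
          exact hbne (v2_inj (by omega)).symm
        · intro hmem
          exact absurd (Finset.mem_range.mpr hi₀M) hmem
      rw [hsum1, hsum2]
      simp only [zero_add]
      constructor
      · intro _
        exact Or.inr ⟨i₀, hi₀⟩
      · intro _
        trivial
    · have hsum1 : (∑ k ∈ range (2*M+2+1), if m = k*(2*k+1) then (1:K) else 0) = 0 :=
        Finset.sum_eq_zero (fun k _ => if_neg (fun hc => h1 ⟨k, hc⟩))
      have hsum2 : (∑ i ∈ range (2*M+2), if m = (i+1)*(2*i+1) then (1:K) else 0) = 0 :=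
        Finset.sum_eq_zero (fun i _ => if_neg (fun hc => h2 ⟨i, hc⟩))
      rw [hsum1, hsum2]
      constructor
      · intro hc
        exfalso
        rw [add_zero] at hc
        exact zero_ne_one hc
      · intro hc
        exfalso
        rcases hc with h | h
        · exact h1 h
        · exact h2 h

lemma pow24 (f : R) : f^24 = E2 (E2 (E2 (f^3))) := by
  have h : f^24 = (((f^3)^2)^2)^2 := by ring
  rw [h, sq (f^3), sq (E2 (f^3)), sq (E2 (E2 (f^3)))]

lemma E8_coeff (f : R) (n : ℕ) : (E2 (E2 (E2 f))).coeff n = if 8 ∣ n then f.coeff (n/8) else 0 := by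
  have h : E2 (E2 (E2 f)) = Polynomial.expand K 8 f := by
    show Polynomial.expand K 2 (Polynomial.expand K 2 (Polynomial.expand K 2 f)) = _
    rw [Polynomial.expand_expand, Polynomial.expand_expand]
    all_goals norm_num
  rw [h]
  exact Polynomial.coeff_expand (by norm_num) f n

lemma hsub_one (p : R) : 1 - p = 1 + p := by
  linear_combination (-p) * two_eq_zero_R

/-- the cube congruence specialized at a single coefficient -/
lemma Dp_cubed_coeff {m n : ℕ} (hmn : m ≤ n) :
    ((Dp n)^3).coeff m = (∑ k ∈ range (2*m+2+1), (X:R)^(k*(2*k+1))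
      + ∑ i ∈ range (2*m+2), (X:R)^((i+1)*(2*i+1))).coeff m := by
  have h1 : Cong m (Dp n) (Dp m) := Dp_ext (le_refl m) hmn
  have h2 : Cong m (Dp (2*(2*m+2))) (Dp m) := Dp_ext (le_refl m) (by omega)
  have h3 : Cong m (Dp n) (Dp (2*(2*m+2))) := h1.trans h2.symm
  have hcube : Cong m ((Dp n)^3) ((Dp (2*(2*m+2)))^3) := by
    have e1 : (Dp n)^3 = Dp n * Dp n * Dp n := by ring
    have e2 : (Dp (2*(2*m+2)))^3 = Dp (2*(2*m+2)) * Dp (2*(2*m+2)) * Dp (2*(2*m+2)) := by ring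
    rw [e1, e2]
    exact Cong.mul (Cong.mul h3 h3) h3
  exact (hcube.trans (core m)).coeff_eq (le_refl m)

end TauProof

/-- `τ(n)`: the coefficient of `X^n` in `X · ∏_{k=1}^{n} (1 - X^k)^24 ∈ ℤ[X]`,
i.e. the `n`-th `q`-expansion coefficient of the discriminant form `Δ`. -/
noncomputable def tau (n : ℕ) : ℤ :=
  (Polynomial.X * ∏ k ∈ Finset.Icc 1 n, (1 - Polynomial.X ^ k) ^ 24).coeff n

/-- For `n ≥ 1`, `τ(n)` is odd iff `n` is the square of an odd number;
i.e. `Δ ≡ Σ_{m≥0} q^{(2m+1)²} (mod 2)` coefficientwise. -/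
theorem tau_odd_iff (n : ℕ) (hn : 1 ≤ n) :
    Odd (tau n) ↔ ∃ m : ℕ, n = (2 * m + 1) ^ 2 := by
  classical
  obtain ⟨n', rfl⟩ : ∃ n', n = n'+1 := ⟨n-1, by omega⟩
  set φ : ℤ →+* TauProof.K := Int.castRingHom (ZMod 2) with hφ
  -- cast parity criterion
  have hodd : ∀ z : ℤ, Odd z ↔ (z : TauProof.K) = 1 := by
    intro z
    have h0 : ((z : TauProof.K) = 0) ↔ (2:ℤ) ∣ z := ZMod.intCast_zmod_eq_zero_iff_dvd z 2
    have h1 : ∀ x : TauProof.K, x ≠ 0 ↔ x = 1 := by decide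
    rw [← Int.not_even_iff_odd, even_iff_two_dvd, ← h0]
    exact h1 _
  -- the mapped polynomial
  have hmap : (Polynomial.X * ∏ k ∈ Finset.Icc 1 (n'+1), (1 - Polynomial.X ^ k) ^ 24).map φ
      = Polynomial.X * TauProof.E2 (TauProof.E2 (TauProof.E2 ((TauProof.Dp (n'+1))^3))) := by
    rw [Polynomial.map_mul, Polynomial.map_X]
    congr 1
    rw [Polynomial.map_prod]
    have hfac : ∀ k ∈ Finset.Icc 1 (n'+1),
        Polynomial.map φ ((1 - Polynomial.X ^ k)^24) = (1 + (Polynomial.X : TauProof.R)^k)^24 := by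
      intro k _
      rw [Polynomial.map_pow, Polynomial.map_sub, Polynomial.map_one, Polynomial.map_pow,
        Polynomial.map_X, TauProof.hsub_one]
    rw [Finset.prod_congr rfl hfac]
    have h24 : ∏ k ∈ Finset.Icc 1 (n'+1), (1 + (Polynomial.X : TauProof.R)^k)^24
        = (TauProof.Dp (n'+1))^24 := by
      rw [TauProof.Dp, ← Finset.prod_pow, ← Finset.Ico_add_one_right_eq_Icc,
        Finset.prod_Ico_eq_prod_range]
      try simp only [Nat.add_sub_cancel]
      refine Finset.prod_congr rfl ?_
      intro i _
      rw [Nat.add_comm 1 i]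
    rw [h24, TauProof.pow24]
  -- coefficient formula
  have hcoeff : ((tau (n'+1) : ℤ) : TauProof.K)
      = if 8 ∣ n' then ((TauProof.Dp (n'+1))^3).coeff (n'/8) else 0 := by
    have h1 : ((tau (n'+1) : ℤ) : TauProof.K)
        = ((Polynomial.X * ∏ k ∈ Finset.Icc 1 (n'+1), (1 - Polynomial.X ^ k) ^ 24).map φ).coeff
          (n'+1) := by
      rw [Polynomial.coeff_map, tau]
      rfl
    rw [h1, hmap, Polynomial.coeff_X_mul, TauProof.E8_coeff]
  rw [hodd, hcoeff]
  by_cases h8 : 8 ∣ n'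
  · rw [if_pos h8]
    set m := n'/8 with hm
    have hn8 : n' = 8*m := by omega
    have hmle : m ≤ n'+1 := by omega
    rw [TauProof.Dp_cubed_coeff hmle, TauProof.psi_coeff m m (le_refl m)]
    constructor
    · rintro (⟨k, hk⟩ | ⟨i, hi⟩)
      · refine ⟨2*k, ?_⟩
        have h5 : n'+1 = 8*m+1 := by omega
        rw [h5, hk, TauProof.v1_sq]
        congr 1
        ring
      · refine ⟨2*i+1, ?_⟩
        have h5 : n'+1 = 8*m+1 := by omega
        rw [h5, hi, TauProof.v2_sq]
        congr 1
        ring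
    · rintro ⟨m', hm'⟩
      rcases Nat.even_or_odd m' with ⟨k, hk⟩ | ⟨k, hk⟩
      · left
        refine ⟨k, ?_⟩
        have e2 : (2*m'+1)^2 = 8*(k*(2*k+1)) + 1 := by rw [hk]; ring
        have e3 : n' = 8*(k*(2*k+1)) := by omega
        have := hn8
        set a := k*(2*k+1)
        omega
      · right
        refine ⟨k, ?_⟩
        have e2 : (2*m'+1)^2 = 8*((k+1)*(2*k+1)) + 1 := by rw [hk]; ring
        have e3 : n' = 8*((k+1)*(2*k+1)) := by omega
        have := hn8
        set a := (k+1)*(2*k+1)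
        omega
  · rw [if_neg h8]
    constructor
    · intro hc
      exfalso
      exact zero_ne_one hc
    · rintro ⟨m', hm'⟩
      exfalso
      apply h8
      rcases Nat.even_or_odd m' with ⟨k, hk⟩ | ⟨k, hk⟩
      · have e2 : (2*m'+1)^2 = 8*(k*(2*k+1)) + 1 := by rw [hk]; ring
        have e3 : n' = 8*(k*(2*k+1)) := by omega
        exact ⟨_, e3⟩
      · have e2 : (2*m'+1)^2 = 8*((k+1)*(2*k+1)) + 1 := by rw [hk]; ring
        have e3 : n' = 8*((k+1)*(2*k+1)) := by omega
        exact ⟨_, e3⟩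
end

section
/- For every n ∈ ℕ, the coefficient of q^n in Δ³ is congruent to q₃(n) modulo 2; that is, Σ_{(i,j,k) ∈ ℕ³, i+j+k=n} τ(i)τ(j)τ(k) ≡ q₃(n) (mod 2). -/
/-- `Δ = Σ τ(n) qⁿ ∈ ℤ[[q]]`. -/
noncomputable def Delta : PowerSeries ℤ := PowerSeries.mk fun n => tau n

/-- `q₃(n)`: the number of ordered triples `(a, b, c)` of positive odd integers
with `a² + b² + c² = n`. -/
noncomputable def q3 (n : ℕ) : ℕ :=
  Nat.card {t : ℤ × ℤ × ℤ // 0 < t.1 ∧ Odd t.1 ∧ 0 < t.2.1 ∧ Odd t.2.1 ∧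
    0 < t.2.2 ∧ Odd t.2.2 ∧ t.1 ^ 2 + t.2.1 ^ 2 + t.2.2 ^ 2 = (n : ℤ)}


/-
Modulo 2 we have `(1 - q^k)^24 = ((1 - q^k)^3)^8`, so `Δ ≡ q F(q^8)` with `F = ∏ (1 - q^k)^3`.
Jacobi's identity `F = Σ (-1)^m (2m+1) q^{m(m+1)/2}` reduces modulo 2 to `F ≡ Σ q^{m(m+1)/2}`, and
`8 · m(m+1)/2 + 1 = (2m+1)^2` gives `Δ ≡ Σ_{m ≥ 0} q^{(2m+1)^2}`, whose cube counts the triples of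
positive odd integers by the sum of their squares.

Jacobi's identity modulo 2 is proved in truncated form. The q-binomial theorem gives the finite
triple product `∏_{i=1}^{M+1} (1 + q^i z) ∏_{i=0}^{M} (z + q^i) = Σ_j q^{e_j} [2M+2, j]_q z^j`.
Differentiating at `z = 1` in characteristic 2 leaves `(q;q)_M (q;q)_{M+1}` on the left and the odd
`j` on the right. After a further multiplication by `(q;q)_{M+1}`, each `(q;q)_{M+1} [2M+2, j]_q`
is `1` to the precision that matters.
-/

open Polynomial Finset

theorem two_mul_add_one_sq (m : ℕ) : (2 * m + 1) ^ 2 = 8 * (m + 1).choose 2 + 1 := by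
  apply Nat.cast_injective (R := ℚ)
  push_cast [Nat.cast_choose_two]
  ring

theorem le_choose_two_succ (w : ℕ) : w ≤ (w + 1).choose 2 := by
  rw [Nat.choose_succ_succ', Nat.choose_one_right]
  omega

theorem choose_two_succ_injective : Function.Injective fun w : ℕ => (w + 1).choose 2 :=
  StrictMono.injective <| strictMono_nat_of_lt_succ fun w => by
    have h : (w + 1 + 1).choose 2 = (w + 1).choose 1 + (w + 1).choose 2 :=
      Nat.choose_succ_succ' (w + 1) 1
    rw [Nat.choose_one_right] at h
    omega

theorem choose_two_add_mul_sub_eq {n w j : ℕ} (hw : w ≤ n) (hj : j = n + 1 + w ∨ j = n - w) :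
    j.choose 2 + n * (2 * n + 2 - j) = (n + 1).choose 2 + n * (n + 1) + (w + 1).choose 2 := by
  obtain ⟨v, rfl⟩ := Nat.exists_eq_add_of_le hw
  rcases hj with rfl | rfl
  · rw [show 2 * (w + v) + 2 - (w + v + 1 + w) = v + 1 by omega]
    apply Nat.cast_injective (R := ℚ)
    push_cast [Nat.cast_choose_two]
    ring
  · rw [show 2 * (w + v) + 2 - (w + v - w) = 2 * w + v + 2 by omega, show w + v - w = v by omega]
    apply Nat.cast_injective (R := ℚ)
    push_cast [Nat.cast_choose_two]
    ring

theorem sum_range_two_mul_add_two {β : Type*} [AddCommMonoid β] (f : ℕ → β) (n : ℕ) :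
    ∑ j ∈ range (2 * n + 2), f j = ∑ w ∈ range (n + 1), (f (n + 1 + w) + f (n - w)) := by
  rw [show 2 * n + 2 = (n + 1) + (n + 1) by ring, sum_range_add, ← sum_range_reflect f (n + 1),
    ← sum_add_distrib]
  simp [add_comm]

section CommRing

variable (R : Type*) [CommRing R]

noncomputable def gaussBinom : ℕ → ℕ → R[X]
  | _, 0 => 1
  | 0, _ + 1 => 0
  | n + 1, k + 1 => gaussBinom n k + X ^ (k + 1) * gaussBinom n (k + 1)

noncomputable def qPochhammer (m : ℕ) : R[X] := ∏ i ∈ range m, (1 - X ^ (i + 1))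

variable {R}

@[simp]
theorem gaussBinom_zero_right (n : ℕ) : gaussBinom R n 0 = 1 := by
  cases n <;> rfl

theorem gaussBinom_succ_succ (n k : ℕ) :
    gaussBinom R (n + 1) (k + 1) = gaussBinom R n k + X ^ (k + 1) * gaussBinom R n (k + 1) :=
  rfl

theorem gaussBinom_eq_zero_of_lt {n k : ℕ} (h : n < k) : gaussBinom R n k = 0 := by
  induction n generalizing k with
  | zero => obtain ⟨k, rfl⟩ := Nat.exists_eq_succ_of_ne_zero h.ne'; rfl
  | succ n ih =>
    obtain ⟨k, rfl⟩ := Nat.exists_eq_succ_of_ne_zero (Nat.ne_zero_of_lt h)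
    rw [gaussBinom_succ_succ, ih (by omega), ih (by omega), mul_zero, add_zero]

theorem qPochhammer_succ (m : ℕ) :
    qPochhammer R (m + 1) = qPochhammer R m * (1 - X ^ (m + 1)) :=
  prod_range_succ _ _

theorem map_qPochhammer {S : Type*} [CommRing S] (f : R →+* S) (m : ℕ) :
    (qPochhammer R m).map f = qPochhammer S m := by
  simp [qPochhammer, Polynomial.map_prod]

theorem qPochhammer_mul_gaussBinom {n k : ℕ} (h : k ≤ n) :
    qPochhammer R k * gaussBinom R n k = ∏ i ∈ range k, (1 - X ^ (n - i)) := by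
  induction n generalizing k with
  | zero =>
    obtain rfl : k = 0 := by omega
    simp [qPochhammer]
  | succ n ih =>
    rcases k with _ | k
    · simp [qPochhammer]
    have hkn : k ≤ n := by omega
    have hnext : X ^ (k + 1) * (qPochhammer R (k + 1) * gaussBinom R n (k + 1)) =
        (X ^ (k + 1) - X ^ (n + 1)) * ∏ i ∈ range k, (1 - X ^ (n - i)) := by
      rcases hkn.lt_or_eq with hlt | rfl
      · have hX : (X : R[X]) ^ (k + 1) * X ^ (n - k) = X ^ (n + 1) := by
          rw [← pow_add]; congr 1; omega
        rw [ih hlt, prod_range_succ]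
        linear_combination (-∏ i ∈ range k, (1 - X ^ (n - i) : R[X])) * hX
      · rw [gaussBinom_eq_zero_of_lt (Nat.lt_succ_self _), mul_zero, mul_zero, sub_self, zero_mul]
    rw [gaussBinom_succ_succ, prod_range_succ']
    simp only [Nat.add_sub_add_right, Nat.sub_zero]
    linear_combination (1 - X ^ (k + 1) : R[X]) * ih hkn + hnext +
      gaussBinom R n k * qPochhammer_succ (R := R) k

theorem coeff_eq_of_smodEq {p q : R[X]} {d n : ℕ}
    (h : p ≡ q [SMOD Ideal.span {(X : R[X]) ^ d}]) (hn : n < d) : p.coeff n = q.coeff n := by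
  rw [SModEq.sub_mem, Ideal.mem_span_singleton, X_pow_dvd_iff] at h
  simpa [sub_eq_zero] using h n hn

theorem X_pow_mul_smodEq {p q : R[X]} {d : ℕ} (h : p ≡ q [SMOD Ideal.span {(X : R[X]) ^ d}])
    (e : ℕ) : X ^ e * p ≡ X ^ e * q [SMOD Ideal.span {(X : R[X]) ^ (e + d)}] := by
  rw [SModEq.sub_mem, Ideal.mem_span_singleton] at h ⊢
  rw [← mul_sub, pow_add]
  exact mul_dvd_mul_left _ h

theorem smodEq_of_X_pow_mul {p q : R[X]} {d e : ℕ}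
    (h : X ^ e * p ≡ X ^ e * q [SMOD Ideal.span {(X : R[X]) ^ (e + d)}]) :
    p ≡ q [SMOD Ideal.span {(X : R[X]) ^ d}] := by
  rw [SModEq.sub_mem, Ideal.mem_span_singleton, X_pow_dvd_iff] at h ⊢
  intro i hi
  have := h (i + e) (by omega)
  rwa [← mul_sub, coeff_X_pow_mul] at this

theorem prod_one_sub_X_pow_smodEq_one {ι : Type*} {s : Finset ι} {f : ι → ℕ} {d : ℕ}
    (h : ∀ i ∈ s, d ≤ f i) :
    ∏ i ∈ s, (1 - X ^ f i) ≡ 1 [SMOD Ideal.span {(X : R[X]) ^ d}] := by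
  simpa using SModEq.prod (I := Ideal.span {(X : R[X]) ^ d}) (s := s)
    (x := fun i => 1 - X ^ f i) (y := fun _ => 1) fun i hi => by
    rw [SModEq.sub_mem, Ideal.mem_span_singleton, sub_sub_cancel_left, dvd_neg]
    exact pow_dvd_pow _ (h i hi)

theorem qPochhammer_smodEq_qPochhammer {a b d : ℕ} (ha : d ≤ a + 1) (hb : d ≤ b + 1) :
    qPochhammer R a ≡ qPochhammer R b [SMOD Ideal.span {(X : R[X]) ^ d}] := by
  wlog hab : a ≤ b generalizing a b
  · exact (this hb ha (by omega)).symm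
  rw [qPochhammer, qPochhammer, ← prod_range_mul_prod_Ico _ hab]
  conv_lhs => rw [← mul_one (∏ i ∈ range a, _)]
  exact SModEq.rfl.mul (prod_one_sub_X_pow_smodEq_one fun i hi => by
    have := (mem_Ico.mp hi).1; omega).symm

theorem qPochhammer_mul_gaussBinom_smodEq_one {M n k d : ℕ} (hkn : k ≤ n) (hM : d ≤ M + 1)
    (hk : d ≤ k + 1) (hnk : d ≤ n - k + 1) :
    qPochhammer R M * gaussBinom R n k ≡ 1 [SMOD Ideal.span {(X : R[X]) ^ d}] := by
  refine ((qPochhammer_smodEq_qPochhammer hM hk).mul SModEq.rfl).trans ?_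
  rw [qPochhammer_mul_gaussBinom hkn]
  exact prod_one_sub_X_pow_smodEq_one fun i hi => by have := mem_range.mp hi; omega

/-- The q-binomial theorem, `q` being `X` and `z` the outer variable. -/
theorem coeff_prod_C_add_C_mul_X (a b : R[X]) (m j : ℕ) :
    (∏ i ∈ range m, (C a + C (b * X ^ i) * X)).coeff j =
      b ^ j * X ^ j.choose 2 * gaussBinom R m j * a ^ (m - j) := by
  induction m generalizing b j with
  | zero => rcases j with _ | j <;> simp [gaussBinom, coeff_one]
  | succ m ih =>
    have hshift (i : ℕ) :
        C a + C (b * X ^ (i + 1)) * X = C a + C (b * X * X ^ i) * (X : R[X][X]) := by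
      rw [pow_succ', mul_assoc]
    rw [prod_range_succ', pow_zero, mul_one]
    simp only [hshift]
    rw [mul_add, ← mul_assoc]
    rcases j with _ | j
    · rw [coeff_add, coeff_mul_C, mul_coeff_zero, coeff_X_zero, mul_zero, add_zero, ih]
      simp [pow_succ]
    rw [coeff_add, coeff_mul_C, coeff_mul_X, coeff_mul_C, ih, ih, gaussBinom_succ_succ,
      Nat.choose_succ_succ', Nat.choose_one_right, Nat.add_sub_add_right]
    rcases lt_or_ge j m with hjm | hjm
    · rw [show m - j = m - (j + 1) + 1 by omega]
      ring
    · rw [gaussBinom_eq_zero_of_lt (show m < j + 1 by omega)]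
      ring

/-- Factoring `q^min(i, M)` out of each `q^M + q^i z` turns the left side into the finite Jacobi
triple product. -/
theorem prod_C_X_pow_add_C_X_pow_mul_X (M : ℕ) :
    ∏ i ∈ range (2 * M + 2), (C (X ^ M) + C (X ^ i) * X : R[X][X]) =
      C (X ^ ((M + 1).choose 2 + M * (M + 1))) * (X + 1) *
        ((∏ i ∈ range M, (X + C (X ^ (i + 1)) : R[X][X])) *
          ∏ i ∈ range (M + 1), (1 + C (X ^ (i + 1)) * X : R[X][X])) := by
  have hlow : ∀ i ∈ range (M + 1), (C (X ^ M) + C (X ^ i) * X : R[X][X]) =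
      C (X ^ i) * (X + C (X ^ (M - i))) := fun i hi => by
    rw [mul_add, ← C_mul, ← pow_add, Nat.add_sub_cancel' (Nat.le_of_lt_succ (mem_range.mp hi))]
    ring
  have hhigh : ∀ i ∈ range (M + 1), (C (X ^ M) + C (X ^ (M + 1 + i)) * X : R[X][X]) =
      C (X ^ M) * (1 + C (X ^ (i + 1)) * X) := fun i _ => by
    rw [show M + 1 + i = M + (i + 1) by ring, pow_add, C_mul]
    ring
  have hreflect : ∏ i ∈ range (M + 1), (X + C (X ^ (M - i)) : R[X][X]) =
      ∏ i ∈ range (M + 1), (X + C (X ^ i)) := by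
    simpa using prod_range_reflect (fun i => (X + C (X ^ i) : R[X][X])) (M + 1)
  rw [show 2 * M + 2 = (M + 1) + (M + 1) by ring, prod_range_add, prod_congr rfl hlow,
    prod_congr rfl hhigh, prod_mul_distrib, prod_mul_distrib, ← map_prod, prod_pow_eq_pow_sum,
    sum_range_id, ← Nat.choose_two_right, prod_const, card_range, hreflect, prod_range_succ']
  simp only [pow_zero, map_one, pow_add, map_mul, map_pow, pow_mul]
  ring

theorem gaussBinom_mul_qPochhammer_smodEq {M w j : ℕ} (hw : w ≤ M)
    (hj : j = M + 1 + w ∨ j = M - w) :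
    X ^ j.choose 2 * gaussBinom R (2 * M + 2) j * (X ^ M) ^ (2 * M + 2 - j) *
        qPochhammer R (M + 1) ≡ X ^ ((M + 1).choose 2 + M * (M + 1) + (w + 1).choose 2)
      [SMOD Ideal.span {(X : R[X]) ^ ((M + 1).choose 2 + M * (M + 1) + (M + 1))}] := by
  set c := (M + 1).choose 2 + M * (M + 1)
  have hone : qPochhammer R (M + 1) * gaussBinom R (2 * M + 2) j ≡ 1
      [SMOD Ideal.span {(X : R[X]) ^ (M + 1 - w)}] :=
    qPochhammer_mul_gaussBinom_smodEq_one (by omega) (by omega) (by omega) (by omega)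
  have hmono : Ideal.span {(X : R[X]) ^ (c + (w + 1).choose 2 + (M + 1 - w))} ≤
      Ideal.span {(X : R[X]) ^ (c + (M + 1))} := by
    rw [Ideal.span_singleton_le_span_singleton]
    exact pow_dvd_pow _ (by have := le_choose_two_succ w; omega)
  have hfactor : X ^ j.choose 2 * gaussBinom R (2 * M + 2) j * (X ^ M) ^ (2 * M + 2 - j) *
      qPochhammer R (M + 1) =
        X ^ (c + (w + 1).choose 2) * (qPochhammer R (M + 1) * gaussBinom R (2 * M + 2) j) := by
    rw [← choose_two_add_mul_sub_eq hw hj, pow_add, pow_mul]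
    ring
  have := (X_pow_mul_smodEq hone (c + (w + 1).choose 2)).mono hmono
  rwa [mul_one, ← hfactor] at this

end CommRing

theorem eval_one_derivative_eq_sum {S : Type*} [CommSemiring S] {p : S[X]} {n : ℕ}
    (hp : p.natDegree < n) : p.derivative.eval 1 = ∑ j ∈ range n, (j : S) * p.coeff j := by
  rw [derivative_eval, sum_over_range' _ (fun _ => by simp) n hp]
  simp [mul_comm]

theorem eval_one_derivative_X_add_one_mul {S : Type*} [CommRing S] [CharP S 2] (p : S[X]) :
    ((X + 1) * p).derivative.eval 1 = p.eval 1 := by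
  simp [derivative_mul, CharTwo.add_self_eq_zero]

section CharTwo

variable {R : Type*} [CommRing R] [CharP R 2]

theorem X_pow_mul_qPochhammer_mul_qPochhammer_succ (M : ℕ) :
    X ^ ((M + 1).choose 2 + M * (M + 1)) * (qPochhammer R M * qPochhammer R (M + 1)) =
      ∑ j ∈ range (2 * M + 3),
        (j : R[X]) * (X ^ j.choose 2 * gaussBinom R (2 * M + 2) j * (X ^ M) ^ (2 * M + 2 - j)) := by
  set B := ∏ i ∈ range (2 * M + 2), (C (X ^ M) + C (1 * X ^ i) * X : R[X][X])
  have hcoeff (j : ℕ) :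
      B.coeff j = X ^ j.choose 2 * gaussBinom R (2 * M + 2) j * (X ^ M) ^ (2 * M + 2 - j) := by
    rw [coeff_prod_C_add_C_mul_X, one_pow, one_mul]
  have hdeg : B.natDegree < 2 * M + 3 := by
    rw [Nat.lt_succ_iff, natDegree_le_iff_coeff_eq_zero]
    intro j hj
    rw [hcoeff, gaussBinom_eq_zero_of_lt hj, mul_zero, zero_mul]
  have hfactor : B = (X + 1) * (C (X ^ ((M + 1).choose 2 + M * (M + 1))) *
      ((∏ i ∈ range M, (X + C (X ^ (i + 1)) : R[X][X])) *
        ∏ i ∈ range (M + 1), (1 + C (X ^ (i + 1)) * X : R[X][X]))) := by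
    simp only [B, one_mul, prod_C_X_pow_add_C_X_pow_mul_X]
    ring
  have hderiv := eval_one_derivative_eq_sum hdeg
  simp only [hcoeff] at hderiv
  rw [hfactor, eval_one_derivative_X_add_one_mul] at hderiv
  rw [← hderiv]
  simp [eval_prod, qPochhammer, CharTwo.sub_eq_add, add_comm]

/-- Jacobi's identity `(q;q)_∞^3 ≡ Σ_w q^(w(w+1)/2)` modulo 2, truncated. -/
theorem qPochhammer_mul_qPochhammer_succ_sq_smodEq (M : ℕ) :
    qPochhammer R M * qPochhammer R (M + 1) ^ 2 ≡ ∑ w ∈ range (M + 1), X ^ (w + 1).choose 2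
      [SMOD Ideal.span {(X : R[X]) ^ (M + 1)}] := by
  set c := (M + 1).choose 2 + M * (M + 1)
  set T : ℕ → R[X] := fun j => (j : R[X]) *
    (X ^ j.choose 2 * gaussBinom R (2 * M + 2) j * (X ^ M) ^ (2 * M + 2 - j)) *
      qPochhammer R (M + 1)
  have hterm : ∀ w ∈ range (M + 1), ∀ j, (j = M + 1 + w ∨ j = M - w) →
      T j ≡ (j : R[X]) * X ^ (c + (w + 1).choose 2)
        [SMOD Ideal.span {(X : R[X]) ^ (c + (M + 1))}] := fun w hw j hj => by
    have := (SModEq.rfl (x := (j : R[X]))).mul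
      (gaussBinom_mul_qPochhammer_smodEq (Nat.le_of_lt_succ (mem_range.mp hw)) hj)
    rwa [← mul_assoc] at this
  have hlhs : X ^ c * (qPochhammer R M * qPochhammer R (M + 1) ^ 2) =
      ∑ w ∈ range (M + 1), (T (M + 1 + w) + T (M - w)) := by
    have hlast : ((2 * M + 2 : ℕ) : R[X]) = 0 := by
      rw [CharTwo.natCast_eq_ite, if_pos ⟨M + 1, by ring⟩]
    rw [show X ^ c * (qPochhammer R M * qPochhammer R (M + 1) ^ 2) =
        X ^ c * (qPochhammer R M * qPochhammer R (M + 1)) * qPochhammer R (M + 1) by ring,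
      X_pow_mul_qPochhammer_mul_qPochhammer_succ, sum_mul, sum_range_succ, hlast, zero_mul,
      zero_mul, add_zero, ← sum_range_two_mul_add_two]
  -- the two indices `M + 1 + w` and `M - w` carrying `q^(c + w(w+1)/2)` have opposite parity
  have hrhs : X ^ c * ∑ w ∈ range (M + 1), X ^ (w + 1).choose 2 =
      ∑ w ∈ range (M + 1), (((M + 1 + w : ℕ) : R[X]) * X ^ (c + (w + 1).choose 2) +
        ((M - w : ℕ) : R[X]) * X ^ (c + (w + 1).choose 2)) := by
    rw [mul_sum]
    refine sum_congr rfl fun w hw => ?_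
    have hodd : ((M + 1 + w + (M - w) : ℕ) : R[X]) = 1 := by
      rw [CharTwo.natCast_eq_ite, if_neg (Nat.not_even_iff_odd.mpr
        ⟨M, by have := mem_range.mp hw; omega⟩)]
    rw [← add_mul, ← Nat.cast_add, hodd, one_mul, ← pow_add]
  apply smodEq_of_X_pow_mul (e := c)
  rw [hlhs, hrhs]
  exact SModEq.sum fun w hw => (hterm w hw _ (Or.inl rfl)).add (hterm w hw _ (Or.inr rfl))

open scoped Classical in
theorem coeff_qPochhammer_pow_three {n K : ℕ} (h : n ≤ K) :
    (qPochhammer R K ^ 3).coeff n = if ∃ w, n = (w + 1).choose 2 then 1 else 0 := by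
  have hn : qPochhammer R K ≡ qPochhammer R n [SMOD Ideal.span {(X : R[X]) ^ (n + 1)}] :=
    qPochhammer_smodEq_qPochhammer (by omega) le_rfl
  have hn' : qPochhammer R K ≡ qPochhammer R (n + 1) [SMOD Ideal.span {(X : R[X]) ^ (n + 1)}] :=
    qPochhammer_smodEq_qPochhammer (by omega) (by omega)
  have hcube := (hn.mul (hn'.pow 2)).trans (qPochhammer_mul_qPochhammer_succ_sq_smodEq n)
  rw [← pow_succ'] at hcube
  rw [coeff_eq_of_smodEq hcube n.lt_succ_self, finsetSum_coeff]
  simp only [coeff_X_pow]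
  split_ifs with htri
  · obtain ⟨m, rfl⟩ := htri
    simp only [choose_two_succ_injective.eq_iff]
    rw [sum_ite_eq, if_pos (mem_range.mpr (Nat.lt_succ_of_le (le_choose_two_succ m)))]
  · exact sum_eq_zero fun w _ => if_neg fun hw => htri ⟨w, hw⟩

end CharTwo

theorem tau_eq_coeff (n : ℕ) : tau n = (X * qPochhammer ℤ n ^ 24).coeff n := by
  rw [tau, qPochhammer, ← prod_pow, range_eq_Ico,
    prod_Ico_add' (fun i => ((1 : ℤ[X]) - X ^ i) ^ 24)]
  rfl

theorem expand_eight_eq_pow (f : (ZMod 2)[X]) : expand (ZMod 2) 8 f = f ^ 8 := by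
  rw [show 8 = 2 * (2 * 2) by rfl, expand_mul, expand_mul, ZMod.expand_card, ZMod.expand_card,
    ZMod.expand_card, ← pow_mul, ← pow_mul]

open scoped Classical in
theorem cast_tau (n : ℕ) : (tau n : ZMod 2) = if ∃ m, n = (2 * m + 1) ^ 2 then 1 else 0 := by
  rw [tau_eq_coeff, ← eq_intCast (Int.castRingHom (ZMod 2)), ← coeff_map, Polynomial.map_mul,
    map_X, Polynomial.map_pow, map_qPochhammer, show 24 = 3 * 8 by rfl, pow_mul,
    ← expand_eight_eq_pow]
  simp only [two_mul_add_one_sq]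
  rcases n with _ | t
  · rw [mul_coeff_zero, coeff_X_zero, zero_mul, if_neg (by omega)]
  rw [coeff_X_mul, coeff_expand (by norm_num)]
  by_cases h8 : 8 ∣ t
  · obtain ⟨s, rfl⟩ := h8
    rw [if_pos (dvd_mul_right 8 s), Nat.mul_div_cancel_left s (by norm_num),
      coeff_qPochhammer_pow_three (by omega)]
    exact if_congr ⟨fun ⟨w, hw⟩ => ⟨w, by omega⟩, fun ⟨w, hw⟩ => ⟨w, by omega⟩⟩ rfl rfl
  · rw [if_neg h8, if_neg]
    rintro ⟨m, hm⟩
    exact h8 ⟨(m + 1).choose 2, by omega⟩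

noncomputable def oddPositivesUpTo (n : ℕ) : Finset ℤ := {a ∈ Icc 1 (n : ℤ) | Odd a}

noncomputable def oddSquareSeries (S : Type*) [CommSemiring S] (n : ℕ) : PowerSeries S :=
  ∑ a ∈ oddPositivesUpTo n, PowerSeries.X ^ (a.natAbs ^ 2)

theorem q3_eq_card (n : ℕ) : q3 n = #{t ∈ oddPositivesUpTo n ×ˢ oddPositivesUpTo n ×ˢ
    oddPositivesUpTo n | t.1.natAbs ^ 2 + t.2.1.natAbs ^ 2 + t.2.2.natAbs ^ 2 = n} := by
  refine Nat.subtype_card _ fun ⟨a, b, c⟩ => ?_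
  have hsum : a.natAbs ^ 2 + b.natAbs ^ 2 + c.natAbs ^ 2 = n ↔
      a ^ 2 + b ^ 2 + c ^ 2 = (n : ℤ) := by
    zify
    simp only [sq_abs]
  simp only [mem_filter, mem_product, oddPositivesUpTo, mem_Icc, hsum]
  constructor
  · rintro ⟨⟨⟨⟨ha, -⟩, hao⟩, ⟨⟨hb, -⟩, hbo⟩, ⟨⟨hc, -⟩, hco⟩⟩, h⟩
    exact ⟨ha, hao, hb, hbo, hc, hco, h⟩
  · rintro ⟨ha, hao, hb, hbo, hc, hco, h⟩
    refine ⟨⟨⟨⟨ha, ?_⟩, hao⟩, ⟨⟨hb, ?_⟩, hbo⟩, ⟨⟨hc, ?_⟩, hco⟩⟩, h⟩ <;> nlinarith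

theorem coeff_sum_X_pow_pow_three {S ι : Type*} [CommSemiring S] (s : Finset ι) (e : ι → ℕ)
    (n : ℕ) : PowerSeries.coeff n ((∑ a ∈ s, (PowerSeries.X : PowerSeries S) ^ e a) ^ 3) =
      (#{t ∈ s ×ˢ s ×ˢ s | e t.1 + e t.2.1 + e t.2.2 = n} : S) := by
  have hexpand : (∑ a ∈ s, (PowerSeries.X : PowerSeries S) ^ e a) ^ 3 =
      ∑ t ∈ s ×ˢ s ×ˢ s, PowerSeries.X ^ (e t.1 + e t.2.1 + e t.2.2) := by
    rw [pow_three, sum_mul_sum, ← sum_product', sum_mul_sum, ← sum_product']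
    simp only [pow_add, mul_assoc]
  rw [hexpand, map_sum]
  simp only [PowerSeries.coeff_X_pow, sum_boole, eq_comm]

open scoped Classical in
theorem coeff_oddSquareSeries {S : Type*} [CommSemiring S] {i n : ℕ} (hi : i ≤ n) :
    PowerSeries.coeff i (oddSquareSeries S n) = if ∃ m, i = (2 * m + 1) ^ 2 then 1 else 0 := by
  simp only [oddSquareSeries, map_sum, PowerSeries.coeff_X_pow, sum_boole]
  split_ifs with hsq
  · obtain ⟨m, rfl⟩ := hsq
    have hm : 2 * m + 1 ≤ (2 * m + 1) ^ 2 := Nat.le_self_pow two_ne_zero _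
    have hfilter : {a ∈ oddPositivesUpTo n | (2 * m + 1) ^ 2 = a.natAbs ^ 2} =
        {((2 * m + 1 : ℕ) : ℤ)} := by
      ext a
      simp only [oddPositivesUpTo, mem_filter, mem_Icc, mem_singleton]
      constructor
      · rintro ⟨⟨⟨ha, -⟩, -⟩, hsq⟩
        have := Nat.pow_left_injective two_ne_zero hsq
        omega
      · rintro rfl
        exact ⟨⟨⟨by omega, by omega⟩, ⟨m, by push_cast; ring⟩⟩, by rw [Int.natAbs_natCast]⟩
    rw [hfilter, card_singleton, Nat.cast_one]
  · rw [filter_eq_empty_iff.mpr, card_empty, Nat.cast_zero]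
    intro a ha hsq'
    simp only [oddPositivesUpTo, mem_filter] at ha
    obtain ⟨k, hk⟩ := Int.natAbs_odd.mpr ha.2
    exact hsq ⟨k, by rw [hsq', hk]⟩

theorem coeff_oddSquareSeries_pow_three {S : Type*} [CommSemiring S] (n : ℕ) :
    PowerSeries.coeff n (oddSquareSeries S n ^ 3) = (q3 n : S) := by
  rw [oddSquareSeries, coeff_sum_X_pow_pow_three, q3_eq_card]

/-- For every `n`, the coefficient of `qⁿ` in `Δ³`, that is
`Σ_{i+j+k=n} τ(i)τ(j)τ(k)`, is congruent to `q₃(n)` modulo 2. -/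
theorem delta_cubed_coeff_mod_two (n : ℕ) :
    PowerSeries.coeff n (Delta ^ 3) ≡ (q3 n : ℤ) [ZMOD 2] := by
  set Δ₂ := PowerSeries.map (Int.castRingHom (ZMod 2)) Delta
  have hΔ : PowerSeries.X ^ (n + 1) ∣ Δ₂ - oddSquareSeries (ZMod 2) n := by
    refine PowerSeries.X_pow_dvd_iff.mpr fun i hi => ?_
    rw [map_sub, PowerSeries.coeff_map, Delta, PowerSeries.coeff_mk, eq_intCast, cast_tau,
      coeff_oddSquareSeries (by omega), sub_self]
  have hcube := PowerSeries.X_pow_dvd_iff.mp (hΔ.trans (sub_dvd_pow_sub_pow _ _ 3)) n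
    n.lt_succ_self
  rw [map_sub, sub_eq_zero, coeff_oddSquareSeries_pow_three, ← map_pow, PowerSeries.coeff_map,
    eq_intCast] at hcube
  refine (ZMod.intCast_eq_intCast_iff _ _ 2).mp ?_
  rw [hcube, Int.cast_natCast]
end

section
/- The subfield of ℂ generated over ℚ by the x- and y-coordinates of all nonzero points P ∈ E(ℂ) with 4·P = O equals K; in other words, the field of definition ℚ(E[4]) of the 4-torsion of E is K = ℚ(i, √2, √(1+i)). -/
/-- The elliptic curve `E : y² = x³ + x² + x + 1` over `ℚ`. -/
def Ecurve : WeierstrassCurve ℚ := ⟨0, 1, 0, 1, 1⟩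

/-- The base change of `E` to `ℂ`, as an affine Weierstrass curve. -/
noncomputable def EC : WeierstrassCurve.Affine ℂ := (Ecurve.baseChange ℂ).toAffine

/-- `K := ℚ(i, √2, √(1+i))` as a subfield of `ℂ`, given a fixed square root `s` of `1 + i`. -/
noncomputable def Kfield (s : ℂ) : IntermediateField ℚ ℂ :=
  IntermediateField.adjoin ℚ {Complex.I, ((Real.sqrt 2 : ℝ) : ℂ), s}

/-!
A nonzero point `P = (x, y)` with `4 • P = O` is either `2`-torsion, so `y = 0` and `x` is a root
`e ∈ {-1, i, -i}` of `f(x) = x³ + x² + x + 1`, or a half of a `2`-torsion point `(e, 0)`. For a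
curve `y² = f(x)` the halves of `(e, 0)` are exactly the points with `(x - e)² = f'(e)`: the
tangent at `P` passes through `(e, 0)`. With `s = √(1+i)` this gives `x = -1 ± √2`,
`x = i ± (1 + i) s` and `x = -i ± i √2 s`, and then `f(x)` is the square of `i s (x + i)`,
`(1 + i)(x + 1)` and `(1 - i)(x + 1)` respectively, so all coordinates lie in `K`. Conversely
`i`, `-1 + √2` and `i + (1 + i) s` are coordinates of `4`-torsion points, and they generate `K`.
-/

namespace WeierstrassCurve.Affine

variable {F : Type*} [Field F] {W : Affine F}

lemma negY_of_a₁_of_a₃ (ha₁ : W.a₁ = 0) (ha₃ : W.a₃ = 0) (x y : F) : W.negY x y = -y := by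
  simp [negY, ha₁, ha₃]

lemma equation_iff_of_a₁_of_a₃ (ha₁ : W.a₁ = 0) (ha₃ : W.a₃ = 0) (x y : F) :
    W.Equation x y ↔ y ^ 2 = x ^ 3 + W.a₂ * x ^ 2 + W.a₄ * x + W.a₆ := by
  simp [equation_iff, ha₁, ha₃]

namespace Point

variable [DecidableEq F]

lemma two_nsmul_some_eq_zero_iff {x y : F} (h : W.Nonsingular x y) :
    2 • some x y h = 0 ↔ y = W.negY x y := by
  simp [two_nsmul, add_eq_zero_iff_eq_neg]

lemma two_nsmul_some_eq_zero_iff_of_a₁_of_a₃ (ha₁ : W.a₁ = 0) (ha₃ : W.a₃ = 0) (h2 : (2 : F) ≠ 0)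
    {x y : F} (h : W.Nonsingular x y) : 2 • some x y h = 0 ↔ y = 0 := by
  rw [two_nsmul_some_eq_zero_iff, negY_of_a₁_of_a₃ ha₁ ha₃, eq_neg_iff_add_eq_zero, ← two_mul,
    mul_eq_zero, or_iff_right h2]

lemma two_nsmul_eq_zero_iff_of_a₁_of_a₃ (ha₁ : W.a₁ = 0) (ha₃ : W.a₃ = 0) (h2 : (2 : F) ≠ 0)
    (P : W.Point) : 2 • P = 0 ↔ P = 0 ∨ ∃ e, ∃ h : W.Nonsingular e 0, P = some e 0 h := by
  rcases P with _ | ⟨x, y, h⟩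
  · simp [← zero_def]
  · simpa [two_nsmul_some_eq_zero_iff_of_a₁_of_a₃ ha₁ ha₃ h2] using fun hy : y = 0 ↦ hy ▸ h

lemma two_nsmul_some_eq_some_zero_iff (ha₁ : W.a₁ = 0) (ha₃ : W.a₃ = 0) (h2 : (2 : F) ≠ 0)
    {x y e : F} (h : W.Nonsingular x y) (h' : W.Nonsingular e 0) (hy : y ≠ 0) :
    2 • some x y h = some e 0 h' ↔ (x - e) ^ 2 = 3 * e ^ 2 + 2 * W.a₂ * e + W.a₄ := by
  have hy' : y ≠ W.negY x y := by
    rwa [Ne, ← two_nsmul_some_eq_zero_iff h, two_nsmul_some_eq_zero_iff_of_a₁_of_a₃ ha₁ ha₃ h2]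
  rw [two_nsmul, add_self_of_Y_ne hy', some.injEq, slope_of_Y_ne rfl hy']
  simp only [addY, negAddY, addX, negY_of_a₁_of_a₃ ha₁ ha₃, ha₁, zero_mul, sub_zero, add_zero]
  generalize hℓ : (3 * x ^ 2 + 2 * W.a₂ * x + W.a₄) / (y - -y) = ℓ
  have hℓ' : ℓ * (2 * y) = 3 * x ^ 2 + 2 * W.a₂ * x + W.a₄ := by
    rw [← hℓ, sub_neg_eq_add, ← two_mul, div_mul_cancel₀ _ (mul_ne_zero h2 hy)]
  have hx := (equation_iff_of_a₁_of_a₃ ha₁ ha₃ x y).1 h.1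
  have he := (equation_iff_of_a₁_of_a₃ ha₁ ha₃ e 0).1 h'.1
  -- `ℓ` is the tangent slope at `(x, y)`; the goal says `ℓ² = e + a₂ + 2x` and `y = ℓ (x - e)`.
  constructor
  · rintro ⟨hX, hY⟩
    rw [hX] at hY
    have hxe : x - e ≠ 0 := fun hxe ↦ hy (by linear_combination -hY + ℓ * hxe)
    apply mul_left_cancel₀ hxe
    linear_combination hx - he - (x - e) ^ 2 * hX + (ℓ * (x - e) + y) * hY
  · intro hd
    have hyℓ : ℓ * (x - e) = y := by
      apply mul_left_cancel₀ (mul_ne_zero h2 hy)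
      linear_combination (x - e) * hℓ' + (x - e) * hd + 2 * he - 2 * hx
    have hxe : x - e ≠ 0 := fun hxe ↦ hy (by rw [← hyℓ, hxe, mul_zero])
    have hX : ℓ ^ 2 - W.a₂ - x - x = e := by
      apply mul_right_cancel₀ (pow_ne_zero 2 hxe)
      linear_combination (ℓ * (x - e) + y) * hyℓ + hx - he - (x - e) * hd
    refine ⟨hX, ?_⟩
    rw [hX]
    linear_combination hyℓ

lemma four_nsmul_some_eq_zero_iff (ha₁ : W.a₁ = 0) (ha₃ : W.a₃ = 0) (h2 : (2 : F) ≠ 0)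
    {x y : F} (h : W.Nonsingular x y) : 4 • some x y h = 0 ↔
      y = 0 ∨ ∃ e, W.Nonsingular e 0 ∧ (x - e) ^ 2 = 3 * e ^ 2 + 2 * W.a₂ * e + W.a₄ := by
  rw [show (4 : ℕ) = 2 * 2 from rfl, mul_nsmul, two_nsmul_eq_zero_iff_of_a₁_of_a₃ ha₁ ha₃ h2,
    two_nsmul_some_eq_zero_iff_of_a₁_of_a₃ ha₁ ha₃ h2]
  by_cases hy : y = 0
  · simp [hy]
  · simp only [hy, false_or, two_nsmul_some_eq_some_zero_iff ha₁ ha₃ h2 h _ hy, exists_prop]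

end Point
end WeierstrassCurve.Affine

open WeierstrassCurve.Affine Complex

namespace EC

@[simp] lemma a₁_eq : EC.a₁ = 0 := by simp [EC, Ecurve]
@[simp] lemma a₂_eq : EC.a₂ = 1 := by simp [EC, Ecurve]
@[simp] lemma a₃_eq : EC.a₃ = 0 := by simp [EC, Ecurve]
@[simp] lemma a₄_eq : EC.a₄ = 1 := by simp [EC, Ecurve]
@[simp] lemma a₆_eq : EC.a₆ = 1 := by simp [EC, Ecurve]

lemma Δ_eq : EC.Δ = -256 := by
  norm_num [WeierstrassCurve.Δ, WeierstrassCurve.b₂, WeierstrassCurve.b₄, WeierstrassCurve.b₆,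
    WeierstrassCurve.b₈]

lemma nonsingular_iff_sq_eq {x y : ℂ} : EC.Nonsingular x y ↔ y ^ 2 = x ^ 3 + x ^ 2 + x + 1 := by
  rw [← equation_iff_nonsingular_of_Δ_ne_zero (by rw [Δ_eq]; norm_num),
    equation_iff_of_a₁_of_a₃ a₁_eq a₃_eq]
  simp

lemma four_nsmul_some_eq_zero_iff {x y : ℂ} (h : EC.Nonsingular x y) :
    4 • Point.some x y h = 0 ↔
      y = 0 ∨ ∃ e, e ^ 3 + e ^ 2 + e + 1 = 0 ∧ (x - e) ^ 2 = 3 * e ^ 2 + 2 * e + 1 := by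
  rw [Point.four_nsmul_some_eq_zero_iff a₁_eq a₃_eq two_ne_zero]
  simp [nonsingular_iff_sq_eq, eq_comm]

end EC

def fourTorsionCoords : Set ℂ :=
  {z : ℂ | ∃ (x y : ℂ) (h : EC.Nonsingular x y),
    4 • (WeierstrassCurve.Affine.Point.some x y h) = (0 : EC.Point) ∧ (z = x ∨ z = y)}

lemma mem_of_sq_eq_sq {R S : Type*} [CommRing R] [NoZeroDivisors R] [SetLike S R]
    [NegMemClass S R] {K : S} {y c : R} (hc : c ∈ K) (h : y ^ 2 = c ^ 2) : y ∈ K := by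
  rcases sq_eq_sq_iff_eq_or_eq_neg.1 h with rfl | rfl
  exacts [hc, neg_mem hc]

lemma cubic_eq_zero_iff (x : ℂ) : x ^ 3 + x ^ 2 + x + 1 = 0 ↔ x = -1 ∨ x = I ∨ x = -I := by
  have : x ^ 3 + x ^ 2 + x + 1 = (x - -1) * ((x - I) * (x - -I)) := by
    linear_combination (x + 1) * I_sq
  simp only [this, mul_eq_zero, sub_eq_zero]

lemma ofReal_sqrt_two_sq : ((√2 : ℝ) : ℂ) ^ 2 = 2 := by
  rw [← ofReal_pow, Real.sq_sqrt zero_le_two, ofReal_ofNat]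

lemma Kfield_le_iff {s : ℂ} {L : IntermediateField ℚ ℂ} :
    Kfield s ≤ L ↔ I ∈ L ∧ ((√2 : ℝ) : ℂ) ∈ L ∧ s ∈ L := by
  simp [Kfield, IntermediateField.adjoin_le_iff, Set.insert_subset_iff]

lemma coords_mem_Kfield_of_halving {s e x y : ℂ} (hs : s ^ 2 = 1 + I)
    (he : e ^ 3 + e ^ 2 + e + 1 = 0) (hx : (x - e) ^ 2 = 3 * e ^ 2 + 2 * e + 1)
    (hy : y ^ 2 = x ^ 3 + x ^ 2 + x + 1) : x ∈ Kfield s ∧ y ∈ Kfield s := by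
  obtain ⟨hI, hr, hsK⟩ := Kfield_le_iff.1 (le_refl (Kfield s))
  rcases (cubic_eq_zero_iff e).1 he with rfl | rfl | rfl
  · have hd : x + 1 ∈ Kfield s :=
      mem_of_sq_eq_sq hr (by linear_combination hx - ofReal_sqrt_two_sq)
    have hxK : x ∈ Kfield s := by simpa using sub_mem hd (one_mem _)
    refine ⟨hxK, mem_of_sq_eq_sq (c := I * s * (x + I)) (by aesop) ?_⟩
    linear_combination hy + (x + I) * hx + (2 * x + 1 + I - s ^ 2 * (x + I) ^ 2) * I_sq +
      (x + I) ^ 2 * hs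
  · have hd : x - I ∈ Kfield s := mem_of_sq_eq_sq (c := (1 + I) * s) (by aesop)
      (by linear_combination hx - I * I_sq - (1 + I) ^ 2 * hs)
    have hxK : x ∈ Kfield s := by simpa using add_mem hd hI
    refine ⟨hxK, mem_of_sq_eq_sq (c := (1 + I) * (x + 1)) (by aesop) ?_⟩
    linear_combination hy + (x + 1) * hx + (2 * (x + 1) - (x + 1) ^ 2) * I_sq
  · have hd : x + I ∈ Kfield s := mem_of_sq_eq_sq (c := I * (√2 : ℝ) * s) (by aesop)
      (by linear_combination hx - I ^ 2 * s ^ 2 * ofReal_sqrt_two_sq - 2 * I ^ 2 * hs +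
        (1 - 2 * I) * I_sq)
    have hxK : x ∈ Kfield s := by simpa using sub_mem hd hI
    refine ⟨hxK, mem_of_sq_eq_sq (c := (1 - I) * (x + 1)) (by aesop) ?_⟩
    linear_combination hy + (x + 1) * hx + (2 * (x + 1) - (x + 1) ^ 2) * I_sq

lemma fourTorsionCoords_subset_Kfield {s : ℂ} (hs : s ^ 2 = 1 + I) :
    fourTorsionCoords ⊆ Kfield s := by
  rintro z ⟨x, y, h, h4, hz⟩
  have hy := EC.nonsingular_iff_sq_eq.1 h
  suffices x ∈ Kfield s ∧ y ∈ Kfield s by rcases hz with rfl | rfl <;> simp [this]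
  rcases (EC.four_nsmul_some_eq_zero_iff h).1 h4 with rfl | ⟨e, he, hx⟩
  · have hx : x = -1 ∨ x = I ∨ x = -I := (cubic_eq_zero_iff x).1 (by linear_combination -hy)
    obtain ⟨hI, -, -⟩ := Kfield_le_iff.1 (le_refl (Kfield s))
    exact ⟨by rcases hx with rfl | rfl | rfl <;> aesop, zero_mem _⟩
  · exact coords_mem_Kfield_of_halving hs he hx hy

lemma mem_fourTorsionCoords {x : ℂ} (hx : x ^ 3 + x ^ 2 + x + 1 = 0 ∨
    ∃ e, e ^ 3 + e ^ 2 + e + 1 = 0 ∧ (x - e) ^ 2 = 3 * e ^ 2 + 2 * e + 1) :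
    x ∈ fourTorsionCoords := by
  obtain ⟨y, hy⟩ := IsAlgClosed.exists_pow_nat_eq (x ^ 3 + x ^ 2 + x + 1) two_pos
  have h := EC.nonsingular_iff_sq_eq.2 hy
  refine ⟨x, y, h, (EC.four_nsmul_some_eq_zero_iff h).2 ?_, .inl rfl⟩
  exact hx.imp (fun hx0 ↦ pow_eq_zero_iff two_ne_zero |>.1 (hy.trans hx0)) id

lemma Kfield_le_adjoin_fourTorsionCoords {s : ℂ} (hs : s ^ 2 = 1 + I) :
    Kfield s ≤ IntermediateField.adjoin ℚ fourTorsionCoords := by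
  set L := IntermediateField.adjoin ℚ fourTorsionCoords
  have hI : I ∈ L := IntermediateField.subset_adjoin ℚ _ <|
    mem_fourTorsionCoords (.inl (by simp [pow_succ]))
  have hr : -1 + ((√2 : ℝ) : ℂ) ∈ L := IntermediateField.subset_adjoin ℚ _ <|
    mem_fourTorsionCoords (.inr ⟨-1, by norm_num, by linear_combination ofReal_sqrt_two_sq⟩)
  have hs' : I + (1 + I) * s ∈ L := IntermediateField.subset_adjoin ℚ _ <|
    mem_fourTorsionCoords
      (.inr ⟨I, by simp [pow_succ], by linear_combination (1 + I) ^ 2 * hs + I * I_sq⟩)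
  refine Kfield_le_iff.2 ⟨hI, by simpa using add_mem hr (one_mem L), ?_⟩
  have : s = (I + (1 + I) * s - I) * (1 - I) / 2 := by linear_combination (s / 2) * I_sq
  rw [this]
  exact div_mem (mul_mem (sub_mem hs' hI) (sub_mem (one_mem L) hI)) (ofNat_mem L 2)

/-- The subfield of `ℂ` generated over `ℚ` by the coordinates of the nonzero points
`P ∈ E(ℂ)` with `4·P = O` equals `K = ℚ(i, √2, √(1+i))`, i.e. `ℚ(E[4]) = K`. -/
theorem four_torsion_field (s : ℂ) (hs : s ^ 2 = 1 + Complex.I) :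
    IntermediateField.adjoin ℚ
      {z : ℂ | ∃ (x y : ℂ) (h : EC.Nonsingular x y),
        4 • (WeierstrassCurve.Affine.Point.some x y h) = (0 : EC.Point) ∧ (z = x ∨ z = y)} =
      Kfield s :=
  le_antisymm (IntermediateField.adjoin_le_iff.2 (fourTorsionCoords_subset_Kfield hs))
    (Kfield_le_adjoin_fourTorsionCoords hs)
end
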